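/- arXiv:2012.12349 — 2 statements merged into one kernel-verified Lean document; each statement's English description precedes it below -/
import Mathlib

section
/- Let X be a metric space, μ a measure over X, A ⊆ X nonempty, ζ: 𝒮 → [0,+∞] a gauge, and fix τ > 1. Assume that (1) μ is a regular measure, (2) every element of 𝒮_{μ,ζ} is closed and μ-measurable, (3) 𝒮_{μ,ζ} covers A finely, (4) A has a countable covering by open sets of finite μ-measure, and (5) there exist c ≥ 1 and η > 0 such that for every S ∈ 𝒮_{μ,ζ} there exists S̃ ∈ 𝒮 with Ŝ ⊆ S̃, diam(S̃) ≤ c·diam(S), and ζ(S̃) ≤ η·ζ(S), where Ŝ is the τ-enlargement of S. Then the restriction μ⌊A is absolutely continuous with respect to ψ_ζ⌊A if and only if μ({x ∈ A : F^ζ(μ,x) = +∞}) = 0. -/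
open MeasureTheory Set ENNReal Filter

noncomputable section

/-- The subclass `𝒮_{μ,ζ}` of a class of sets `𝒮`, obtained by removing the sets `S`
where `ζ S = μ S = 0` or `ζ S = μ S = +∞`. -/
def goodClass {X : Type*} [MetricSpace X] (μ : OuterMeasure X) (𝒮 : Set (Set X))
    (ζ : Set X → ℝ≥0∞) : Set (Set X) :=
  {S ∈ 𝒮 | ¬ ((ζ S = 0 ∧ μ S = 0) ∨ (ζ S = ⊤ ∧ μ S = ⊤))}

/-- The quotient function `Q_{μ,ζ}`: equals `+∞` if `ζ S = 0`, `μ S / ζ S` if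
`0 < ζ S < +∞`, and `0` if `ζ S = +∞` (note `a / ⊤ = 0` in `ℝ≥0∞`). -/
def fedQuot {X : Type*} [MetricSpace X] (μ : OuterMeasure X) (ζ : Set X → ℝ≥0∞)
    (S : Set X) : ℝ≥0∞ :=
  if ζ S = 0 then ⊤ else μ S / ζ S

/-- A family of sets `ℱ` covers `A` finely: for every `a ∈ A` and every `ε > 0` there is
`S ∈ ℱ` containing `a` with `diam S < ε`. -/
def CoversFinely {X : Type*} [MetricSpace X] (ℱ : Set (Set X)) (A : Set X) : Prop :=
  ∀ a ∈ A, ∀ ε : ℝ≥0∞, 0 < ε → ∃ S ∈ ℱ, a ∈ S ∧ EMetric.diam S < ε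

/-- The Federer density `F^ζ(μ,x)`. -/
def federerDensity {X : Type*} [MetricSpace X] (μ : OuterMeasure X) (𝒮 : Set (Set X))
    (ζ : Set X → ℝ≥0∞) (x : X) : ℝ≥0∞ :=
  ⨅ (ε : ℝ≥0∞) (_ : 0 < ε),
    ⨆ (S : Set X) (_ : S ∈ goodClass μ 𝒮 ζ) (_ : x ∈ S) (_ : EMetric.diam S < ε),
      fedQuot μ ζ S

/-- The size-`δ` premeasure `φ_{ζ,δ}` of the Carathéodory construction. -/
def preCarMeasure {X : Type*} [MetricSpace X] (𝒮 : Set (Set X)) (ζ : Set X → ℝ≥0∞)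
    (δ : ℝ≥0∞) (R : Set X) : ℝ≥0∞ :=
  ⨅ (E : ℕ → Set X) (_ : ∀ j, E j ∈ 𝒮) (_ : ∀ j, EMetric.diam (E j) ≤ δ)
    (_ : R ⊆ ⋃ j, E j), ∑' j, ζ (E j)

/-- The Carathéodory measure `ψ_ζ`. -/
def carMeasure {X : Type*} [MetricSpace X] (𝒮 : Set (Set X)) (ζ : Set X → ℝ≥0∞)
    (R : Set X) : ℝ≥0∞ :=
  ⨆ (δ : ℝ≥0∞) (_ : 0 < δ), preCarMeasure 𝒮 ζ δ R

/-- The `τ`-enlargement `Ŝ` of a set `S`. -/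
def enlargement {X : Type*} [MetricSpace X] (μ : OuterMeasure X) (𝒮 : Set (Set X))
    (ζ : Set X → ℝ≥0∞) (τ : ℝ) (S : Set X) : Set X :=
  ⋃₀ {T ∈ goodClass μ 𝒮 ζ | (T ∩ S).Nonempty ∧
      EMetric.diam T ≤ ENNReal.ofReal τ * EMetric.diam S}

/-- `μ` is a regular (outer) measure: every set is contained in a `μ`-measurable set of
the same measure. -/
def IsRegularOM {X : Type*} [MetricSpace X] (μ : OuterMeasure X) : Prop :=
  ∀ E : Set X, ∃ F : Set X, E ⊆ F ∧ μ.IsCaratheodory F ∧ μ F = μ E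

/-- `μ` is a Borel (outer) measure: every Borel set is `μ`-measurable. -/
def IsBorelOM {X : Type*} [MetricSpace X] (μ : OuterMeasure X) : Prop :=
  ∀ E : Set X, MeasurableSet[borel X] E → μ.IsCaratheodory E

/-- `μ` is a Borel regular (outer) measure. -/
def IsBorelRegularOM {X : Type*} [MetricSpace X] (μ : OuterMeasure X) : Prop :=
  IsBorelOM μ ∧ ∀ E : Set X, ∃ B : Set X, E ⊆ B ∧ MeasurableSet[borel X] B ∧ μ B = μ E

/-- Carathéodory measurability of a set with respect to a set function. -/
def SetFnCaratheodory {X : Type*} (ν : Set X → ℝ≥0∞) (E : Set X) : Prop :=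
  ∀ T : Set X, ν T = ν (T ∩ E) + ν (T \ E)

/-- `μ⌊A << ν⌊A`: absolute continuity of the restrictions to `A`. -/
def AbsContOn {X : Type*} [MetricSpace X] (μ : OuterMeasure X) (ν : Set X → ℝ≥0∞)
    (A : Set X) : Prop :=
  ∀ E : Set X, ν (A ∩ E) = 0 → μ (A ∩ E) = 0

/-- `S` is σ-finite with respect to the set function `ν`. -/
def SigmaFiniteWrt {X : Type*} (ν : Set X → ℝ≥0∞) (S : Set X) : Prop :=
  ∃ E : ℕ → Set X, S ⊆ ⋃ j, E j ∧ ∀ j, ν (E j) < ⊤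

/-- The integral `∫_B f dν` with respect to an (outer) set function `ν`,
via the layer-cake formula. -/
def omIntegral {X : Type*} (ν : Set X → ℝ≥0∞) (B : Set X) (f : X → ℝ≥0∞) : ℝ≥0∞ :=
  ∫⁻ t in Set.Ioi (0 : ℝ), ν {x ∈ B | ENNReal.ofReal t < f x}

/-- The enlargement condition: there are `c ≥ 1` and `η > 0` such that every
`S ∈ 𝒮_{μ,ζ}` admits `S̃ ∈ 𝒮` with `Ŝ ⊆ S̃`, `diam S̃ ≤ c diam S` and `ζ S̃ ≤ η ζ S`. -/
def EnlCondition {X : Type*} [MetricSpace X] (μ : OuterMeasure X) (𝒮 : Set (Set X))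
    (ζ : Set X → ℝ≥0∞) (τ : ℝ) : Prop :=
  ∃ c : ℝ, 1 ≤ c ∧ ∃ η : ℝ, 0 < η ∧ ∀ S ∈ goodClass μ 𝒮 ζ, ∃ S' ∈ 𝒮,
    enlargement μ 𝒮 ζ τ S ⊆ S' ∧ EMetric.diam S' ≤ ENNReal.ofReal c * EMetric.diam S ∧
      ζ S' ≤ ENNReal.ofReal η * ζ S

/-- The gauge `ζ_α(S) = c_α (diam S)^α`. -/
def zetaDiam {X : Type*} [MetricSpace X] (cα α : ℝ) (S : Set X) : ℝ≥0∞ :=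
  ENNReal.ofReal cα * EMetric.diam S ^ α

/-- The family `ℱ` of closed subsets of `X`. -/
def closedSets (X : Type*) [MetricSpace X] : Set (Set X) := {S | IsClosed S}

/-- The family `ℱ_b` of closed balls of `X` (with positive radius). -/
def closedBalls (X : Type*) [MetricSpace X] : Set (Set X) :=
  {S | ∃ (y : X) (r : ℝ), 0 < r ∧ S = Metric.closedBall y r}

/-- The family `ℱ_o` of open balls of `X` (with positive radius). -/
def openBalls (X : Type*) [MetricSpace X] : Set (Set X) :=
  {S | ∃ (y : X) (r : ℝ), 0 < r ∧ S = Metric.ball y r}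

/-- The `α`-dimensional Hausdorff measure `ℋ^α` with normalizing constant `c_α`. -/
def hausdorffMeasureC (X : Type*) [MetricSpace X] (cα α : ℝ) : Set X → ℝ≥0∞ :=
  carMeasure (closedSets X) (zetaDiam cα α)

/-- The `α`-dimensional spherical Hausdorff measure `𝒮^α` with constant `c_α`. -/
def sphericalMeasureC (X : Type*) [MetricSpace X] (cα α : ℝ) : Set X → ℝ≥0∞ :=
  carMeasure (closedBalls X) (zetaDiam cα α)

/-- `X` is diametrically regular. -/
def DiametricallyRegular (X : Type*) [MetricSpace X] : Prop :=
  ∀ x : X, ∃ R > (0 : ℝ), ∃ δ > (0 : ℝ), ∀ y ∈ Metric.ball x R,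
    ContinuousOn (fun r : ℝ => EMetric.diam (Metric.ball y r)) (Set.Ioo 0 δ)

end

/-! Where the Federer density is finite, small sets of `𝒮_{μ,ζ}` satisfy `μ S ≤ k ζ S`, so a
`ψ_ζ`-null set on which the density is finite is `μ`-null; this is one direction. Conversely, let
`N` be the set where the density is infinite and `V` an open set of finite measure. Vitali's
covering lemma selects disjoint sets `S ⊆ V` with `μ S > t ζ S` whose enlargements cover `N ∩ V`;
the enlargements have total gauge at most `η μ V / t`, so `ψ_ζ (N ∩ V) = 0`, hence `ψ_ζ N = 0`,
and absolute continuity gives `μ N = 0`. -/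

open Topology

theorem MeasureTheory.OuterMeasure.tsum_le_of_pairwiseDisjoint {X : Type*} {μ : OuterMeasure X}
    {u : Set (Set X)} {V : Set X} (hcar : ∀ S ∈ u, μ.IsCaratheodory S)
    (hdisj : u.PairwiseDisjoint id) (hsub : ∀ S ∈ u, S ⊆ V) :
    ∑' S : u, μ S ≤ μ V := by
  let _ : MeasurableSpace X := μ.caratheodory
  -- `V` need not be `μ`-measurable; restricting to it gives a finite measure all the same.
  have hle : μ.caratheodory ≤ (restrict V μ).caratheodory := fun S hS t => by
    simp only [restrict_apply, inter_right_comm t S V, Set.sdiff_inter_right_comm]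
    exact hS (t ∩ V)
  set ν := (restrict V μ).toMeasure hle
  have hmeas : ∀ S ∈ u, MeasurableSet S := fun S hS => (isCaratheodory_iff μ).2 (hcar S hS)
  have hν : ∀ S ∈ u, ν S = μ S := fun S hS => by
    rw [toMeasure_apply _ _ (hmeas S hS), restrict_apply, inter_eq_left.2 (hsub S hS)]
  calc ∑' S : u, μ S = ∑' S : u, ν S := tsum_congr fun S => (hν S S.2).symm
    _ ≤ ν (⋃ S : u, (S : Set X)) := tsum_meas_le_meas_iUnion_of_disjoint ν
        (fun S => hmeas S S.2) ((pairwise_subtype_iff_pairwise_set _ _).2 hdisj)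
    _ ≤ ν univ := measure_mono (subset_univ _)
    _ = μ V := by rw [toMeasure_apply _ _ MeasurableSet.univ, restrict_apply, univ_inter]

section Caratheodory

variable {X : Type*} [MetricSpace X] {𝒮 : Set (Set X)} {ζ : Set X → ℝ≥0∞} {δ : ℝ≥0∞}
  {R : Set X}

theorem preCarMeasure_lt_iff {c : ℝ≥0∞} :
    preCarMeasure 𝒮 ζ δ R < c ↔ ∃ E : ℕ → Set X, (∀ j, E j ∈ 𝒮) ∧
      (∀ j, EMetric.diam (E j) ≤ δ) ∧ R ⊆ ⋃ j, E j ∧ ∑' j, ζ (E j) < c := by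
  simp only [preCarMeasure, iInf_lt_iff, exists_prop]

theorem preCarMeasure_le_tsum {ι : Type*} [Countable ι] [Infinite ι] (E : ι → Set X)
    (h𝒮 : ∀ i, E i ∈ 𝒮) (hdiam : ∀ i, EMetric.diam (E i) ≤ δ) (hcov : R ⊆ ⋃ i, E i) :
    preCarMeasure 𝒮 ζ δ R ≤ ∑' i, ζ (E i) := by
  obtain ⟨_⟩ := nonempty_denumerable ι
  set e := (Denumerable.eqv ι).symm
  rw [← e.tsum_eq]
  refine iInf₂_le_of_le (E ∘ e) (fun n => h𝒮 _) (iInf₂_le_of_le (fun n => hdiam _) ?_ le_rfl)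
  refine hcov.trans (iUnion_subset fun i => ?_)
  simpa using subset_iUnion (E ∘ e) (e.symm i)

/-- `preCarMeasure 𝒮 ζ δ ∅ = 0` means that coverings can be padded by sets of arbitrarily small
total gauge, so countable (in particular finite) coverings become admissible. -/
theorem preCarMeasure_le_tsum_of_countable {ι : Type*} [Countable ι]
    (hempty : preCarMeasure 𝒮 ζ δ ∅ = 0) (E : ι → Set X) (h𝒮 : ∀ i, E i ∈ 𝒮)
    (hdiam : ∀ i, EMetric.diam (E i) ≤ δ) (hcov : R ⊆ ⋃ i, E i) :
    preCarMeasure 𝒮 ζ δ R ≤ ∑' i, ζ (E i) := by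
  refine ENNReal.le_of_forall_pos_le_add fun ε hε _ => ?_
  obtain ⟨P, hP𝒮, hPdiam, -, hPsum⟩ :=
    preCarMeasure_lt_iff.1 (hempty.trans_lt (ENNReal.coe_pos.2 hε))
  calc preCarMeasure 𝒮 ζ δ R ≤ ∑' k, ζ (Sum.elim E P k) :=
        preCarMeasure_le_tsum _ (Sum.forall.2 ⟨h𝒮, hP𝒮⟩) (Sum.forall.2 ⟨hdiam, hPdiam⟩)
          (hcov.trans fun x hx => by
            obtain ⟨i, hi⟩ := mem_iUnion.1 hx
            exact mem_iUnion.2 ⟨Sum.inl i, hi⟩)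
    _ = ∑' i, ζ (E i) + ∑' n, ζ (P n) := ENNReal.summable.tsum_sum ENNReal.summable
    _ ≤ ∑' i, ζ (E i) + ε := by gcongr

theorem preCarMeasure_mono {R' : Set X} (h : R ⊆ R') :
    preCarMeasure 𝒮 ζ δ R ≤ preCarMeasure 𝒮 ζ δ R' :=
  le_iInf₂ fun E h𝒮 => le_iInf₂ fun hdiam hcov => iInf₂_le_of_le E h𝒮 <|
    iInf₂_le_of_le hdiam (h.trans hcov) le_rfl

theorem preCarMeasure_anti {δ' : ℝ≥0∞} (h : δ ≤ δ') :
    preCarMeasure 𝒮 ζ δ' R ≤ preCarMeasure 𝒮 ζ δ R :=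
  le_iInf₂ fun E h𝒮 => le_iInf₂ fun hdiam hcov => iInf₂_le_of_le E h𝒮 <|
    iInf₂_le_of_le (fun j => (hdiam j).trans h) hcov le_rfl

theorem preCarMeasure_le_carMeasure (hδ : 0 < δ) (R : Set X) :
    preCarMeasure 𝒮 ζ δ R ≤ carMeasure 𝒮 ζ R :=
  le_iSup₂ (f := fun δ (_ : 0 < δ) => preCarMeasure 𝒮 ζ δ R) δ hδ

theorem carMeasure_le_iff {c : ℝ≥0∞} :
    carMeasure 𝒮 ζ R ≤ c ↔ ∀ δ : ℝ≥0∞, 0 < δ → preCarMeasure 𝒮 ζ δ R ≤ c :=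
  iSup₂_le_iff

theorem carMeasure_mono {R' : Set X} (h : R ⊆ R') : carMeasure 𝒮 ζ R ≤ carMeasure 𝒮 ζ R' :=
  iSup₂_mono fun _ _ => preCarMeasure_mono h

theorem preCarMeasure_iUnion_le (s : ℕ → Set X) :
    preCarMeasure 𝒮 ζ δ (⋃ j, s j) ≤ ∑' j, preCarMeasure 𝒮 ζ δ (s j) := by
  refine ENNReal.le_of_forall_pos_le_add fun ε hε hfin => ?_
  obtain ⟨ε', hε'0, hε'⟩ := ENNReal.exists_pos_sum_of_countable (ENNReal.coe_ne_zero.2 hε.ne') ℕ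
  have hlt : ∀ j, preCarMeasure 𝒮 ζ δ (s j) < preCarMeasure 𝒮 ζ δ (s j) + ε' j := fun j =>
    ENNReal.lt_add_right (ne_top_of_le_ne_top hfin.ne (ENNReal.le_tsum j))
      (ENNReal.coe_ne_zero.2 (hε'0 j).ne')
  choose E hE𝒮 hEdiam hEcov hEsum using fun j => preCarMeasure_lt_iff.1 (hlt j)
  calc preCarMeasure 𝒮 ζ δ (⋃ j, s j) ≤ ∑' p : ℕ × ℕ, ζ (E p.1 p.2) :=
        preCarMeasure_le_tsum _ (fun p => hE𝒮 _ _) (fun p => hEdiam _ _) <|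
          iUnion_subset fun j => (hEcov j).trans <|
            iUnion_subset fun i => subset_iUnion (fun p : ℕ × ℕ => E p.1 p.2) (j, i)
    _ = ∑' j, ∑' i, ζ (E j i) := ENNReal.tsum_prod (f := fun j i => ζ (E j i))
    _ ≤ ∑' j, (preCarMeasure 𝒮 ζ δ (s j) + ε' j) := ENNReal.tsum_le_tsum fun j => (hEsum j).le
    _ = ∑' j, preCarMeasure 𝒮 ζ δ (s j) + ∑' j, (ε' j : ℝ≥0∞) := ENNReal.tsum_add
    _ ≤ ∑' j, preCarMeasure 𝒮 ζ δ (s j) + ε := by gcongr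

theorem carMeasure_iUnion_le (s : ℕ → Set X) :
    carMeasure 𝒮 ζ (⋃ j, s j) ≤ ∑' j, carMeasure 𝒮 ζ (s j) :=
  carMeasure_le_iff.2 fun _ hδ => (preCarMeasure_iUnion_le s).trans <|
    ENNReal.tsum_le_tsum fun _ => preCarMeasure_le_carMeasure hδ _

end Caratheodory


section Quotient

variable {X : Type*} [MetricSpace X] {μ : OuterMeasure X} {𝒮 : Set (Set X)}
  {ζ : Set X → ℝ≥0∞} {S : Set X}

theorem measure_le_mul_of_fedQuot_le {K : ℝ≥0∞} (hK0 : K ≠ 0) (hK : K ≠ ⊤) (hS : S ∈ 𝒮)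
    (hQ : S ∈ goodClass μ 𝒮 ζ → fedQuot μ ζ S ≤ K) : μ S ≤ K * ζ S := by
  rcases eq_or_ne (ζ S) ⊤ with hζ | hζ
  · simp [hζ, ENNReal.mul_top hK0]
  by_cases hgood : S ∈ goodClass μ 𝒮 ζ
  · have hQS := hQ hgood
    rw [fedQuot] at hQS
    split_ifs at hQS with hζ0
    · exact absurd (top_le_iff.1 hQS) hK
    · exact (ENNReal.div_le_iff hζ0 hζ).1 hQS
  · have hμ : μ S = 0 := by
      simp only [goodClass, mem_setOf_eq, hS, true_and, not_not, hζ, false_and,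
        or_false] at hgood
      exact hgood.2
    simp [hμ]

theorem zeta_le_of_div_lt_fedQuot {M c : ℝ≥0∞} (h : M / c < fedQuot μ ζ S) (hμ : μ S ≤ M) :
    ζ S ≤ c := by
  by_contra! hc
  have hζ0 : ζ S ≠ 0 := (zero_le.trans_lt hc).ne'
  refine h.not_ge ?_
  rw [fedQuot, if_neg hζ0]
  calc μ S / ζ S ≤ M / ζ S := by gcongr
    _ ≤ M / c := ENNReal.div_le_div_left hc.le M

theorem zeta_le_div_of_lt_fedQuot {t : ℝ≥0∞} (ht : t ≠ 0) (h : t < fedQuot μ ζ S) :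
    ζ S ≤ μ S / t := by
  rcases eq_or_ne (ζ S) 0 with hζ0 | hζ0
  · simp [hζ0]
  rw [fedQuot, if_neg hζ0] at h
  rcases eq_or_ne (ζ S) ⊤ with hζ | hζ
  · simp [hζ] at h
  rw [ENNReal.le_div_iff_mul_le (Or.inl ht) (Or.inl h.ne_top), mul_comm]
  exact ((ENNReal.lt_div_iff_mul_lt (Or.inl hζ0) (Or.inl hζ)).1 h).le

theorem measure_pos_of_fedQuot_pos (hS : S ∈ goodClass μ 𝒮 ζ) (h : 0 < fedQuot μ ζ S) :
    0 < μ S := by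
  refine pos_iff_ne_zero.2 fun hμ => ?_
  rcases eq_or_ne (ζ S) 0 with hζ0 | hζ0
  · exact hS.2 (Or.inl ⟨hζ0, hμ⟩)
  · simp [fedQuot, hζ0, hμ] at h

end Quotient

section AbsolutelyContinuous

variable {X : Type*} [MetricSpace X] {μ : OuterMeasure X} {𝒮 : Set (Set X)}
  {ζ : Set X → ℝ≥0∞}

theorem measure_le_mul_preCarMeasure {C : Set X} {K δ : ℝ≥0∞} (hK0 : K ≠ 0) (hK : K ≠ ⊤)
    (hC : ∀ S ∈ 𝒮, (S ∩ C).Nonempty → EMetric.diam S ≤ δ → μ S ≤ K * ζ S) :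
    μ C ≤ K * preCarMeasure 𝒮 ζ δ C := by
  simp only [preCarMeasure, ENNReal.mul_iInf_of_ne hK0 hK, le_iInf_iff]
  intro E h𝒮 hdiam hcov
  calc μ C ≤ ∑' j, μ (E j ∩ C) := by
        refine (μ.mono fun x hx => ?_).trans (measure_iUnion_le _)
        obtain ⟨j, hj⟩ := mem_iUnion.1 (hcov hx)
        exact mem_iUnion.2 ⟨j, hj, hx⟩
    _ ≤ ∑' j, K * ζ (E j) := ENNReal.tsum_le_tsum fun j => by
        rcases (E j ∩ C).eq_empty_or_nonempty with hempty | hne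
        · simp [hempty]
        · exact (μ.mono inter_subset_left).trans (hC _ (h𝒮 j) hne (hdiam j))
    _ = K * ∑' j, ζ (E j) := ENNReal.tsum_mul_left

def fedQuotBoundedSet (μ : OuterMeasure X) (𝒮 : Set (Set X)) (ζ : Set X → ℝ≥0∞)
    (k r : ℝ≥0∞) : Set X :=
  {x | ∀ S ∈ goodClass μ 𝒮 ζ, x ∈ S → EMetric.diam S < r → fedQuot μ ζ S ≤ k}

theorem measure_inter_fedQuotBoundedSet_eq_zero {R : Set X} {k r : ℝ≥0∞}
    (hR : carMeasure 𝒮 ζ R = 0) (hk : k ≠ ⊤) (hr : 0 < r) :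
    μ (R ∩ fedQuotBoundedSet μ 𝒮 ζ k r) = 0 := by
  obtain ⟨δ, hδ0, hδr⟩ := exists_between hr
  have hK : k + 1 ≠ ⊤ := ENNReal.add_ne_top.2 ⟨hk, ENNReal.one_ne_top⟩
  refine nonpos_iff_eq_zero.1 <| calc
    μ (R ∩ fedQuotBoundedSet μ 𝒮 ζ k r)
        ≤ (k + 1) * preCarMeasure 𝒮 ζ δ (R ∩ fedQuotBoundedSet μ 𝒮 ζ k r) := by
          refine measure_le_mul_preCarMeasure (by simp) hK fun S hS ⟨x, hxS, hx⟩ hdiam => ?_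
          exact measure_le_mul_of_fedQuot_le (by simp) hK hS fun hgood =>
            (hx.2 S hgood hxS (hdiam.trans_lt hδr)).trans le_self_add
    _ ≤ (k + 1) * carMeasure 𝒮 ζ R := by
          gcongr
          exact (preCarMeasure_le_carMeasure hδ0 _).trans (carMeasure_mono inter_subset_left)
    _ = 0 := by rw [hR, mul_zero]

theorem setOf_federerDensity_ne_top_subset :
    {x | federerDensity μ 𝒮 ζ x ≠ ⊤} ⊆
      ⋃ (k : ℕ) (n : ℕ), fedQuotBoundedSet μ 𝒮 ζ k (n : ℝ≥0∞)⁻¹ := by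
  intro x hx
  rw [mem_setOf_eq, ← lt_top_iff_ne_top, federerDensity] at hx
  simp only [iInf_lt_iff] at hx
  obtain ⟨ε, hε, hsup⟩ := hx
  obtain ⟨k, hk⟩ := ENNReal.exists_nat_gt hsup.ne
  obtain ⟨n, hn⟩ := ENNReal.exists_inv_nat_lt hε.ne'
  refine mem_iUnion₂.2 ⟨k, n, fun S hS hxS hdiam => le_trans ?_ hk.le⟩
  exact le_iSup₂_of_le (f := fun S (_ : S ∈ goodClass μ 𝒮 ζ) => ⨆ (_ : x ∈ S)
    (_ : EMetric.diam S < ε), fedQuot μ ζ S) S hS (le_iSup₂_of_le hxS (hdiam.trans hn) le_rfl)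

theorem absContOn_of_measure_federerDensity_eq_top {A : Set X}
    (hA : μ {x ∈ A | federerDensity μ 𝒮 ζ x = ⊤} = 0) : AbsContOn μ (carMeasure 𝒮 ζ) A := by
  intro E hE
  have hcover : A ∩ E ⊆ {x ∈ A | federerDensity μ 𝒮 ζ x = ⊤} ∪
      ⋃ (k : ℕ) (n : ℕ), A ∩ E ∩ fedQuotBoundedSet μ 𝒮 ζ k (n : ℝ≥0∞)⁻¹ := by
    intro x hx
    by_cases hxF : federerDensity μ 𝒮 ζ x = ⊤
    · exact Or.inl ⟨hx.1, hxF⟩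
    · obtain ⟨k, n, hkn⟩ := mem_iUnion₂.1 (setOf_federerDensity_ne_top_subset hxF)
      exact Or.inr (mem_iUnion₂.2 ⟨k, n, hx, hkn⟩)
  exact measure_mono_null hcover <| measure_union_null hA <| measure_iUnion_null fun k =>
    measure_iUnion_null fun n => measure_inter_fedQuotBoundedSet_eq_zero hE
      (ENNReal.natCast_ne_top k) (ENNReal.inv_pos.2 (ENNReal.natCast_ne_top n))

end AbsolutelyContinuous

theorem exists_disjoint_subfamily_covering_enlargement_ediam {X : Type*} [MetricSpace X]
    {ℱ : Set (Set X)} {τ : ℝ} (hτ : 1 < τ) {R : ℝ≥0∞} (hR : R ≠ ⊤)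
    (hdiam : ∀ S ∈ ℱ, EMetric.diam S ≤ R) (hne : ∀ S ∈ ℱ, S.Nonempty) :
    ∃ u ⊆ ℱ, u.PairwiseDisjoint id ∧ ∀ S ∈ ℱ, ∃ b ∈ u, (S ∩ b).Nonempty ∧
      EMetric.diam S ≤ ENNReal.ofReal τ * EMetric.diam b := by
  obtain ⟨u, hu, hdisj, hcov⟩ := Vitali.exists_disjoint_subfamily_covering_enlargement id ℱ
    Metric.diam τ hτ (fun _ _ => Metric.diam_nonneg) R.toReal
    (fun S hS => ENNReal.toReal_mono hR (hdiam S hS)) hne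
  refine ⟨u, hu, hdisj, fun S hS => ?_⟩
  obtain ⟨b, hb, hSb, hle⟩ := hcov S hS
  have hfin : ∀ T ∈ ℱ, EMetric.diam T ≠ ⊤ := fun T hT => ne_top_of_le_ne_top hR (hdiam T hT)
  refine ⟨b, hb, hSb, ?_⟩
  rw [← ENNReal.ofReal_toReal (hfin S hS), ← ENNReal.ofReal_toReal (hfin b (hu hb)),
    ← ENNReal.ofReal_mul (by linarith)]
  exact ENNReal.ofReal_le_ofReal hle

section DensityTop

variable {X : Type*} [MetricSpace X] {μ : OuterMeasure X} {𝒮 : Set (Set X)}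
  {ζ : Set X → ℝ≥0∞} {V : Set X}

theorem exists_mem_goodClass_of_federerDensity_eq_top {x : X} {δ t : ℝ≥0∞}
    (hx : federerDensity μ 𝒮 ζ x = ⊤) (hV : V ∈ 𝓝 x) (hδ : 0 < δ) (ht : t ≠ ⊤) :
    ∃ S ∈ goodClass μ 𝒮 ζ, x ∈ S ∧ S ⊆ V ∧ EMetric.diam S < δ ∧ t < fedQuot μ ζ S := by
  obtain ⟨ρ, hρ, hball⟩ := EMetric.mem_nhds_iff.1 hV
  have hsup := iInf₂_eq_top.1 hx (min δ ρ) (lt_min hδ hρ)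
  obtain ⟨S, hS, hxS, hdiam, htS⟩ : ∃ S ∈ goodClass μ 𝒮 ζ, x ∈ S ∧
      EMetric.diam S < min δ ρ ∧ t < fedQuot μ ζ S := by
    have htsup := ht.lt_top
    rw [← hsup] at htsup
    simpa only [lt_iSup_iff, exists_prop] using htsup
  refine ⟨S, hS, hxS, fun y hy => hball ?_, hdiam.trans_le (min_le_left _ _), htS⟩
  exact Metric.mem_eball.2 <|
    (Metric.edist_le_ediam_of_mem hy hxS).trans_lt (hdiam.trans_le (min_le_right _ _))

theorem carMeasure_empty_eq_zero_of_federerDensity_eq_top {x : X} (hx : federerDensity μ 𝒮 ζ x = ⊤)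
    (hV : V ∈ 𝓝 x) (hμV : μ V ≠ ⊤) : carMeasure 𝒮 ζ ∅ = 0 := by
  refine nonpos_iff_eq_zero.1 (carMeasure_le_iff.2 fun δ hδ => ?_)
  refine ENNReal.le_of_forall_pos_le_add fun ε hε _ => ?_
  obtain ⟨ε', hε'0, hε'⟩ := ENNReal.exists_pos_sum_of_countable (ENNReal.coe_ne_zero.2 hε.ne') ℕ
  choose P hP hxP hPV hPdiam hPQ using fun n => exists_mem_goodClass_of_federerDensity_eq_top
    hx hV hδ (ENNReal.div_ne_top hμV (ENNReal.coe_ne_zero.2 (hε'0 n).ne'))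
  calc preCarMeasure 𝒮 ζ δ ∅ ≤ ∑' n, ζ (P n) :=
        preCarMeasure_le_tsum P (fun n => (hP n).1) (fun n => (hPdiam n).le) (empty_subset _)
    _ ≤ ∑' n, (ε' n : ℝ≥0∞) := ENNReal.tsum_le_tsum fun n =>
        zeta_le_of_div_lt_fedQuot (hPQ n) (μ.mono (hPV n))
    _ ≤ 0 + ε := by rw [zero_add]; exact hε'.le

end DensityTop

section Vitali

variable {X : Type*} [MetricSpace X] {μ : OuterMeasure X} {𝒮 : Set (Set X)}
  {ζ : Set X → ℝ≥0∞} {τ : ℝ} {V B : Set X}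

theorem exists_disjoint_cover_by_enlargements (hτ : 1 < τ) (hV : IsOpen V) (hBV : B ⊆ V)
    (hB : ∀ x ∈ B, federerDensity μ 𝒮 ζ x = ⊤) {δ t : ℝ≥0∞} (hδ0 : 0 < δ) (hδ : δ ≠ ⊤)
    (ht : t ≠ ⊤) :
    ∃ u : Set (Set X), u.PairwiseDisjoint id ∧
      (∀ b ∈ u, b ∈ goodClass μ 𝒮 ζ ∧ b ⊆ V ∧ EMetric.diam b ≤ δ ∧ t < fedQuot μ ζ b) ∧
      B ⊆ ⋃ b ∈ u, enlargement μ 𝒮 ζ τ b := by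
  set ℱ := {S | S ∈ goodClass μ 𝒮 ζ ∧ S ⊆ V ∧ EMetric.diam S ≤ δ ∧ t < fedQuot μ ζ S}
  have hne : ∀ S ∈ ℱ, S.Nonempty := fun S hS => nonempty_iff_ne_empty.2 fun hS0 => by
    simpa [hS0] using measure_pos_of_fedQuot_pos hS.1 (zero_le.trans_lt hS.2.2.2)
  obtain ⟨u, huℱ, hdisj, hcov⟩ :=
    exists_disjoint_subfamily_covering_enlargement_ediam hτ hδ (fun S hS => hS.2.2.1) hne
  refine ⟨u, hdisj, fun b hb => huℱ hb, fun x hx => ?_⟩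
  obtain ⟨S, hS, hxS, hSV, hdiam, htS⟩ :=
    exists_mem_goodClass_of_federerDensity_eq_top (hB x hx) (hV.mem_nhds (hBV hx)) hδ0 ht
  obtain ⟨b, hb, hSb, hSdiam⟩ := hcov S ⟨hS, hSV, hdiam.le, htS⟩
  exact mem_iUnion₂.2 ⟨b, hb, S, ⟨hS, hSb, hSdiam⟩, hxS⟩

theorem preCarMeasure_le_of_federerDensity_eq_top (hτ : 1 < τ)
    (hcar : ∀ S ∈ goodClass μ 𝒮 ζ, μ.IsCaratheodory S) {c η : ℝ} (hc : 0 < c)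
    (henl : ∀ S ∈ goodClass μ 𝒮 ζ, ∃ S' ∈ 𝒮, enlargement μ 𝒮 ζ τ S ⊆ S' ∧
      EMetric.diam S' ≤ ENNReal.ofReal c * EMetric.diam S ∧ ζ S' ≤ ENNReal.ofReal η * ζ S)
    (hempty : carMeasure 𝒮 ζ ∅ = 0) (hV : IsOpen V) (hμV : μ V ≠ ⊤) (hBV : B ⊆ V)
    (hB : ∀ x ∈ B, federerDensity μ 𝒮 ζ x = ⊤) {δ t : ℝ≥0∞} (hδ0 : 0 < δ) (hδ : δ ≠ ⊤)
    (ht0 : t ≠ 0) (ht : t ≠ ⊤) :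
    preCarMeasure 𝒮 ζ δ B ≤ ENNReal.ofReal η * μ V / t := by
  have hc0 : ENNReal.ofReal c ≠ 0 := (ENNReal.ofReal_pos.2 hc).ne'
  obtain ⟨u, hdisj, hu, hcov⟩ := exists_disjoint_cover_by_enlargements (μ := μ) (𝒮 := 𝒮)
    hτ hV hBV hB (ENNReal.div_pos hδ0.ne' ENNReal.ofReal_ne_top) (ENNReal.div_ne_top hδ hc0) ht
  have hsum : ∑' b : u, μ b ≤ μ V := OuterMeasure.tsum_le_of_pairwiseDisjoint
    (fun b hb => hcar b (hu b hb).1) hdisj (fun b hb => (hu b hb).2.1)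
  have hu_count : u.Countable := by
    rw [← Set.countable_coe_iff, ← Set.countable_univ_iff]
    refine (Summable.countable_support_ennreal (ne_top_of_le_ne_top hμV hsum)).mono
      fun b _ => (measure_pos_of_fedQuot_pos (hu b b.2).1 (zero_le.trans_lt (hu b b.2).2.2.2)).ne'
  have := hu_count.to_subtype
  choose g hg𝒮 hgenl hgdiam hgζ using fun b : u => henl b (hu b b.2).1
  have hpre_empty : preCarMeasure 𝒮 ζ δ ∅ = 0 :=
    nonpos_iff_eq_zero.1 ((preCarMeasure_le_carMeasure hδ0 ∅).trans hempty.le)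
  calc preCarMeasure 𝒮 ζ δ B ≤ ∑' b : u, ζ (g b) := by
        refine preCarMeasure_le_tsum_of_countable hpre_empty g hg𝒮 (fun b => (hgdiam b).trans ?_) ?_
        · calc ENNReal.ofReal c * EMetric.diam (b : Set X)
              ≤ ENNReal.ofReal c * (δ / ENNReal.ofReal c) := by gcongr; exact (hu b b.2).2.2.1
            _ = δ := ENNReal.mul_div_cancel hc0 ENNReal.ofReal_ne_top
        · intro x hx
          obtain ⟨b, hb, hxb⟩ := mem_iUnion₂.1 (hcov hx)
          exact mem_iUnion.2 ⟨⟨b, hb⟩, hgenl _ hxb⟩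
    _ ≤ ∑' b : u, ENNReal.ofReal η * (μ b / t) := ENNReal.tsum_le_tsum fun b =>
        (hgζ b).trans (by gcongr; exact zeta_le_div_of_lt_fedQuot ht0 (hu b b.2).2.2.2)
    _ = ENNReal.ofReal η * (∑' b : u, μ b) / t := by
        simp only [div_eq_mul_inv, ENNReal.tsum_mul_left, ENNReal.tsum_mul_right, mul_assoc]
    _ ≤ ENNReal.ofReal η * μ V / t := by gcongr

theorem carMeasure_eq_zero_of_federerDensity_eq_top (hτ : 1 < τ)
    (hcar : ∀ S ∈ goodClass μ 𝒮 ζ, μ.IsCaratheodory S) (henl : EnlCondition μ 𝒮 ζ τ)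
    (hempty : carMeasure 𝒮 ζ ∅ = 0) (hV : IsOpen V) (hμV : μ V ≠ ⊤) (hBV : B ⊆ V)
    (hB : ∀ x ∈ B, federerDensity μ 𝒮 ζ x = ⊤) : carMeasure 𝒮 ζ B = 0 := by
  obtain ⟨c, hc, η, -, henl⟩ := henl
  have hbound : ∀ n : ℕ, n ≠ 0 → carMeasure 𝒮 ζ B ≤ ENNReal.ofReal η * μ V / n :=
    fun n hn => carMeasure_le_iff.2 fun δ hδ => (preCarMeasure_anti (min_le_left δ 1)).trans <|
      preCarMeasure_le_of_federerDensity_eq_top hτ hcar (by linarith) henl hempty hV hμV hBV hB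
        (lt_min hδ one_pos) (ne_top_of_le_ne_top ENNReal.one_ne_top (min_le_right _ _))
        (Nat.cast_ne_zero.2 hn) (ENNReal.natCast_ne_top n)
  have hlim : Tendsto (fun n : ℕ => ENNReal.ofReal η * μ V / n) atTop (𝓝 0) := by
    simpa [div_eq_mul_inv] using ENNReal.Tendsto.const_mul ENNReal.tendsto_inv_nat_nhds_zero
      (Or.inr (ENNReal.mul_ne_top ENNReal.ofReal_ne_top hμV))
  exact nonpos_iff_eq_zero.1 <|
    ge_of_tendsto hlim (eventually_atTop.2 ⟨1, fun n hn => hbound n (by omega)⟩)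

end Vitali

theorem stmt2_general {X : Type*} [MetricSpace X] (μ : MeasureTheory.OuterMeasure X)
    (𝒮 : Set (Set X)) (ζ : Set X → ℝ≥0∞) (A : Set X)
    (τ : ℝ) (hτ : 1 < τ)
    (h2 : ∀ S ∈ goodClass μ 𝒮 ζ, IsClosed S ∧ μ.IsCaratheodory S)
    (h4 : ∃ U : ℕ → Set X, A ⊆ ⋃ j, U j ∧ ∀ j, IsOpen (U j) ∧ μ (U j) < ⊤)
    (h5 : EnlCondition μ 𝒮 ζ τ) :
    AbsContOn μ (carMeasure 𝒮 ζ) A ↔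
      μ {x ∈ A | federerDensity μ 𝒮 ζ x = ⊤} = 0 := by
  refine ⟨fun hac => ?_, absContOn_of_measure_federerDensity_eq_top⟩
  set N := {x ∈ A | federerDensity μ 𝒮 ζ x = ⊤}
  rcases N.eq_empty_or_nonempty with hN | ⟨a, haA, haN⟩
  · rw [hN, measure_empty]
  obtain ⟨U, hAU, hU⟩ := h4
  obtain ⟨j₀, haU⟩ := mem_iUnion.1 (hAU haA)
  have hempty : carMeasure 𝒮 ζ ∅ = 0 := carMeasure_empty_eq_zero_of_federerDensity_eq_top haN
    ((hU j₀).1.mem_nhds haU) (hU j₀).2.ne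
  have hN : carMeasure 𝒮 ζ N = 0 := by
    refine nonpos_iff_eq_zero.1 <| calc
      carMeasure 𝒮 ζ N ≤ carMeasure 𝒮 ζ (⋃ j, N ∩ U j) := by
          rw [← inter_iUnion]
          exact carMeasure_mono (subset_inter subset_rfl ((sep_subset _ _).trans hAU))
      _ ≤ ∑' j, carMeasure 𝒮 ζ (N ∩ U j) := carMeasure_iUnion_le _
      _ = 0 := ENNReal.tsum_eq_zero.2 fun j => carMeasure_eq_zero_of_federerDensity_eq_top hτ
          (fun S hS => (h2 S hS).2) h5 hempty (hU j).1 (hU j).2.ne inter_subset_right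
          fun x hx => hx.1.2
  have hAN : A ∩ N = N := inter_eq_self_of_subset_right (sep_subset _ _)
  simpa [hAN] using hac N (by rwa [hAN])

/-- characterization of absolute continuity. -/
theorem stmt2 {X : Type*} [MetricSpace X] (μ : MeasureTheory.OuterMeasure X)
    (𝒮 : Set (Set X)) (ζ : Set X → ℝ≥0∞) (A : Set X) (hA : A.Nonempty)
    (τ : ℝ) (hτ : 1 < τ)
    (h1 : IsRegularOM μ)
    (h2 : ∀ S ∈ goodClass μ 𝒮 ζ, IsClosed S ∧ μ.IsCaratheodory S)
    (h3 : CoversFinely (goodClass μ 𝒮 ζ) A)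
    (h4 : ∃ U : ℕ → Set X, A ⊆ ⋃ j, U j ∧ ∀ j, IsOpen (U j) ∧ μ (U j) < ⊤)
    (h5 : EnlCondition μ 𝒮 ζ τ) :
    AbsContOn μ (carMeasure 𝒮 ζ) A ↔
      μ {x ∈ A | federerDensity μ 𝒮 ζ x = ⊤} = 0 :=
  stmt2_general μ 𝒮 ζ A τ hτ h2 h4 h5
end

section
/- (Area formula for the Hausdorff measure I.) Let X be a metric space, μ a measure over X, α > 0, c_α > 0, and A ⊆ X. Assume: (1) μ is both a regular measure and a Borel measure; (2) ℱ_{μ,ζ_α} covers A finely; (3) A is a Borel set; (4) A has a countable covering by open sets of finite μ-measure; (5) the set {x ∈ A : 𝔡^α(μ,x) = 0} is σ-finite with respect to ℋ^α; (6) μ⌊A is absolutely continuous with respect to ℋ^α⌊A. Then 𝔡^α(μ,·): A → [0,+∞] is Borel and for every Borel set B ⊆ A one has μ(B) = ∫_B 𝔡^α(μ,x) dℋ^α(x). -/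
open MeasureTheory Set ENNReal Filter

/-!
The density `𝔡 = 𝔡^α(μ, ·)` is the infimum over `n` of the suprema of `Q_{μ,ζ_α}` at scale `1/n`,
which are lower semicontinuous because adding a nearby point to a closed test set barely changes
its diameter; hence `𝔡` is Borel. Two comparison principles relate `μ` and `ℋ^α`:
if `𝔡 < t` on `B` then `μ B ≤ t ℋ^α B`, since every small closed set meeting `B` has `μ ≤ t ζ_α`
(regularity of `μ` lets the scales tend to zero); and if `t < 𝔡` on `B ⊆ V` with `V` open then
`t ℋ^α B ≤ μ V`, by Vitali's covering lemma applied to the closed sets `S ⊆ V` with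
`t ζ_α(S) < μ S`. Approximating Borel sets from outside by open sets of almost the same measure,
the second principle becomes `t ℋ^α B ≤ μ B` when `t ≤ 𝔡` on `B`. Slicing `B` along
`t ^ n ≤ 𝔡 < t ^ (n + 1)` squeezes `μ B` and `∫_B 𝔡 dℋ^α` within a factor `t` of each other, and
`t → 1`. The slice `{𝔡 = 0}` is `μ`-null by σ-finiteness, and `{𝔡 = ∞}` is `ℋ^α`-null by the
second principle, hence `μ`-null by absolute continuity.
-/

open scoped Topology NNReal

theorem ENNReal.eq_zero_of_forall_le_mul {a b : ℝ≥0∞} (hb : b ≠ ∞)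
    (h : ∀ s, 0 < s → s ≠ ∞ → a ≤ s * b) : a = 0 := by
  have hlim : Tendsto (fun n : ℕ => (n : ℝ≥0∞)⁻¹ * b) atTop (𝓝 0) := by
    simpa using ENNReal.Tendsto.mul_const ENNReal.tendsto_inv_nat_nhds_zero (Or.inr hb)
  refine nonpos_iff_eq_zero.1 (ge_of_tendsto hlim (eventually_atTop.2 ⟨1, fun n hn => ?_⟩))
  exact h _ (ENNReal.inv_pos.2 (natCast_ne_top n))
    (ENNReal.inv_ne_top.2 (by exact_mod_cast Nat.one_le_iff_ne_zero.1 hn))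

theorem ENNReal.le_of_forall_one_lt_le_mul {a b : ℝ≥0∞}
    (h : ∀ t : ℝ≥0, 1 < t → a ≤ t * b) : a ≤ b := by
  have hlim : Tendsto (fun t : ℝ≥0 => (t : ℝ≥0∞) * b) (𝓝[>] 1) (𝓝 b) := by
    have h1 : Tendsto (fun t : ℝ≥0 => (t : ℝ≥0∞)) (𝓝[>] 1) (𝓝 1) :=
      ENNReal.tendsto_coe.2 nhdsWithin_le_nhds
    simpa using ENNReal.Tendsto.mul_const h1 (Or.inl one_ne_zero)
  exact ge_of_tendsto hlim (eventually_nhdsWithin_of_forall h)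

theorem SigmaFiniteWrt.mono {Ω : Type*} {ν : Set Ω → ℝ≥0∞} {S T : Set Ω} (h : SigmaFiniteWrt ν S)
    (hTS : T ⊆ S) : SigmaFiniteWrt ν T :=
  let ⟨E, hSE, hE⟩ := h
  ⟨E, hTS.trans hSE, hE⟩

section LayerCake

variable {Ω : Type*} [MeasurableSpace Ω]

theorem MeasureTheory.lintegral_eq_lintegral_meas_ofReal_lt (μ : Measure Ω) {f : Ω → ℝ≥0∞}
    (hf : AEMeasurable f μ) :
    ∫⁻ x, f x ∂μ = ∫⁻ t in Ioi 0, μ {x | ENNReal.ofReal t < f x} := by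
  by_cases htop : μ {x | f x = ∞} = 0
  · have hfin : ∀ᵐ x ∂μ, f x ≠ ∞ := measure_eq_zero_iff_ae_notMem.1 htop
    calc ∫⁻ x, f x ∂μ = ∫⁻ x, ENNReal.ofReal (f x).toReal ∂μ :=
          lintegral_congr_ae (hfin.mono fun x hx => (ofReal_toReal hx).symm)
      _ = ∫⁻ t in Ioi 0, μ {x | t < (f x).toReal} :=
          lintegral_eq_lintegral_meas_lt μ (ae_of_all _ fun _ => toReal_nonneg) hf.ennreal_toReal
      _ = _ := setLIntegral_congr_fun measurableSet_Ioi fun t ht => measure_congr <|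
          hfin.mono fun x hx => propext (ofReal_lt_iff_lt_toReal (le_of_lt ht) hx).symm
  · rw [lintegral_eq_top_of_measure_eq_top_ne_zero hf htop, eq_comm, eq_top_iff]
    calc ∞ = ∫⁻ _ in Ioi (0 : ℝ), μ {x | f x = ∞} := by
          rw [setLIntegral_const, Real.volume_Ioi, ENNReal.mul_top htop]
      _ ≤ _ := lintegral_mono fun t => measure_mono fun x (hx : f x = ∞) => by
          simp [hx]

theorem omIntegral_eq_setLIntegral {ν : Set Ω → ℝ≥0∞} (Ψ : Measure Ω)
    (hν : ∀ s, MeasurableSet s → ν s = Ψ s) {f : Ω → ℝ≥0∞} (hf : Measurable f) {B : Set Ω}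
    (hB : MeasurableSet B) : omIntegral ν B f = ∫⁻ x in B, f x ∂Ψ := by
  rw [omIntegral, lintegral_eq_lintegral_meas_ofReal_lt _ hf.aemeasurable]
  refine setLIntegral_congr_fun measurableSet_Ioi fun t _ => ?_
  have hm : MeasurableSet {x | ENNReal.ofReal t < f x} := measurableSet_lt measurable_const hf
  rw [Measure.restrict_apply hm, inter_comm]
  exact hν _ (hB.inter hm)

end LayerCake

section Layers

variable {Ω : Type*} [MeasurableSpace Ω] {ν ρ Ψ : Measure Ω} {f : Ω → ℝ≥0∞} {s : Set Ω}

theorem measure_le_mul_of_forall_Ico_zpow (hf : Measurable f) (hs : MeasurableSet s) {t : ℝ≥0}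
    (ht : 1 < t) (h0 : ν (s ∩ f ⁻¹' {0}) = 0) (htop : ν (s ∩ f ⁻¹' {∞}) = 0)
    (hlayer : ∀ n : ℤ, ν (s ∩ f ⁻¹' Ico ((t : ℝ≥0∞) ^ n) ((t : ℝ≥0∞) ^ (n + 1))) ≤
      t * ρ (s ∩ f ⁻¹' Ico ((t : ℝ≥0∞) ^ n) ((t : ℝ≥0∞) ^ (n + 1)))) :
    ν s ≤ t * ρ s := by
  rw [measure_eq_measure_preimage_add_measure_tsum_Ico_zpow ν hf hs ht, h0, htop, zero_add,
    zero_add, measure_eq_measure_preimage_add_measure_tsum_Ico_zpow ρ hf hs ht]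
  exact (ENNReal.tsum_le_tsum hlayer).trans
    (ENNReal.tsum_mul_left.trans_le (mul_le_mul_right le_add_self _))

theorem measure_eq_withDensity_of_forall_le_mul (hf : Measurable f) (hs : MeasurableSet s)
    (hle : ∀ P ⊆ s, MeasurableSet P → ∀ t ≠ ∞, (∀ x ∈ P, f x < t) → ν P ≤ t * Ψ P)
    (hge : ∀ P ⊆ s, MeasurableSet P → ∀ t, (∀ x ∈ P, t ≤ f x) → t * Ψ P ≤ ν P)
    (hν0 : ν (s ∩ f ⁻¹' {0}) = 0) (hνtop : ν (s ∩ f ⁻¹' {∞}) = 0)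
    (hΨtop : Ψ (s ∩ f ⁻¹' {∞}) = 0) :
    ν s = Ψ.withDensity f s := by
  have hlayer : ∀ {t : ℝ≥0} (n : ℤ), 1 < t →
      let P := s ∩ f ⁻¹' Ico ((t : ℝ≥0∞) ^ n) ((t : ℝ≥0∞) ^ (n + 1))
      ν P ≤ t * ((t : ℝ≥0∞) ^ n * Ψ P) ∧ (t : ℝ≥0∞) ^ n * Ψ P ≤ ν P ∧
        (t : ℝ≥0∞) ^ n * Ψ P ≤ Ψ.withDensity f P ∧
        Ψ.withDensity f P ≤ t * ((t : ℝ≥0∞) ^ n * Ψ P) := by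
    intro t n ht P
    have ht0 : (t : ℝ≥0∞) ≠ 0 := by exact_mod_cast (zero_lt_one.trans ht).ne'
    have hP : MeasurableSet P := hs.inter (hf measurableSet_Ico)
    have hsucc : (t : ℝ≥0∞) * (t : ℝ≥0∞) ^ n = (t : ℝ≥0∞) ^ (n + 1) := by
      rw [ENNReal.zpow_add ht0 coe_ne_top, zpow_one, mul_comm]
    rw [← mul_assoc, hsucc, withDensity_apply _ hP]
    exact ⟨hle P inter_subset_left hP _ (ENNReal.zpow_lt_top ht0 coe_ne_top _).ne
        fun x hx => hx.2.2,
      hge P inter_subset_left hP _ fun x hx => hx.2.1,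
      (setLIntegral_const P _).symm.trans_le (setLIntegral_mono' hP fun x hx => hx.2.1),
      (setLIntegral_mono' hP fun x hx => hx.2.2.le).trans_eq (setLIntegral_const P _)⟩
  refine le_antisymm (ENNReal.le_of_forall_one_lt_le_mul fun t ht => ?_)
    (ENNReal.le_of_forall_one_lt_le_mul fun t ht => ?_)
  · refine measure_le_mul_of_forall_Ico_zpow hf hs ht hν0 hνtop fun n => ?_
    obtain ⟨h1, -, h2, -⟩ := hlayer n ht
    exact h1.trans (mul_le_mul_right h2 _)
  · refine measure_le_mul_of_forall_Ico_zpow hf hs ht ?_ ?_ fun n => ?_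
    · rw [withDensity_apply _ (hs.inter (hf (measurableSet_singleton 0)))]
      exact (setLIntegral_eq_zero_iff (hs.inter (hf (measurableSet_singleton 0))) hf).2
        (ae_of_all _ fun x hx => hx.2)
    · exact withDensity_absolutelyContinuous Ψ f hΨtop
    · obtain ⟨-, h1, -, h2⟩ := hlayer n ht
      exact h2.trans (mul_le_mul_right h1 _)

end Layers

theorem MeasureTheory.Measure.exists_isOpen_superset_measure_sdiff_le {Ω : Type*}
    [TopologicalSpace Ω] [TopologicalSpace.PseudoMetrizableSpace Ω] {m : MeasurableSpace Ω}
    [BorelSpace Ω] (ν : Measure Ω) {U : ℕ → Set Ω} (hU : ∀ j, IsOpen (U j))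
    (hνU : ∀ j, ν (U j) ≠ ∞) {B : Set Ω} (hB : MeasurableSet B) (hBU : B ⊆ ⋃ j, U j)
    {ε : ℝ≥0∞} (hε : ε ≠ 0) : ∃ V, IsOpen V ∧ B ⊆ V ∧ ν (V \ B) ≤ ε := by
  obtain ⟨δ, hδ, hδε⟩ := ENNReal.exists_pos_sum_of_countable hε ℕ
  have hpiece : ∀ j, ∃ V, IsOpen V ∧ B ∩ U j ⊆ V ∧ ν ((V ∩ U j) \ B) ≤ δ j := fun j => by
    have : IsFiniteMeasure (ν.restrict (U j)) := ⟨by simpa using (hνU j).lt_top⟩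
    obtain ⟨V, hBV, hV, -, hVB⟩ := (hB.inter (hU j).measurableSet).exists_isOpen_sdiff_lt
      (μ := ν.restrict (U j)) (measure_ne_top _ _) (ENNReal.coe_ne_zero.2 (hδ j).ne')
    refine ⟨V, hV, hBV, le_of_eq_of_le ?_ hVB.le⟩
    rw [Measure.restrict_apply (hV.measurableSet.diff (hB.inter (hU j).measurableSet))]
    congr 1
    ext x
    simp only [Set.mem_sdiff, Set.mem_inter_iff]
    tauto
  choose V hV hBV hVB using hpiece
  refine ⟨⋃ j, V j ∩ U j, isOpen_iUnion fun j => (hV j).inter (hU j), fun x hx => ?_, ?_⟩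
  · obtain ⟨j, hj⟩ := mem_iUnion.1 (hBU hx)
    exact mem_iUnion.2 ⟨j, hBV j ⟨hx, hj⟩, hj⟩
  · calc ν ((⋃ j, V j ∩ U j) \ B) ≤ ∑' j, ν ((V j ∩ U j) \ B) := by
          rw [iUnion_sdiff]; exact measure_iUnion_le _
      _ ≤ ∑' j, (δ j : ℝ≥0∞) := ENNReal.tsum_le_tsum hVB
      _ ≤ ε := hδε.le

section Development

variable {X : Type*} [MetricSpace X]

section Gauge

variable {cα α : ℝ}

theorem zetaDiam_le_of_ediam_le (hα : 0 ≤ α) {S : Set X} {d : ℝ≥0∞}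
    (h : Metric.ediam S ≤ d) : zetaDiam cα α S ≤ ENNReal.ofReal cα * d ^ α :=
  mul_le_mul_right (ENNReal.rpow_le_rpow h hα) _

theorem zetaDiam_ne_top (hα : 0 ≤ α) {S : Set X} (h : Metric.ediam S ≠ ∞) :
    zetaDiam cα α S ≠ ∞ :=
  mul_ne_top ofReal_ne_top (rpow_ne_top_of_nonneg hα h)

theorem zetaDiam_closure (S : Set X) : zetaDiam cα α (closure S) = zetaDiam cα α S :=
  congrArg (fun d => ENNReal.ofReal cα * d ^ α) (Metric.ediam_closure S)

theorem zetaDiam_empty (hα : 0 < α) : zetaDiam cα α (∅ : Set X) = 0 :=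
  (congrArg (fun d => ENNReal.ofReal cα * d ^ α) Metric.ediam_empty).trans <| by
    simp [ENNReal.zero_rpow_of_pos hα]

end Gauge

section Quotient

variable {μ : OuterMeasure X} {𝒮 : Set (Set X)} {ζ : Set X → ℝ≥0∞} {S : Set X} {c : ℝ≥0∞}

theorem mul_lt_of_lt_fedQuot (hS : S ∈ goodClass μ 𝒮 ζ) (h : c < fedQuot μ ζ S) :
    c * ζ S < μ S := by
  unfold fedQuot at h
  split_ifs at h with h0
  · rw [h0, mul_zero, pos_iff_ne_zero]
    exact fun hμ => hS.2 (Or.inl ⟨h0, hμ⟩)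
  · have hζ : ζ S ≠ ∞ := fun hζ => by simp [hζ] at h
    exact (ENNReal.lt_div_iff_mul_lt (Or.inl h0) (Or.inl hζ)).1 h

theorem lt_fedQuot_of_mul_lt (hS : S ∈ 𝒮) (hc : c ≠ ∞) (hζ : ζ S ≠ ∞) (h : c * ζ S < μ S) :
    S ∈ goodClass μ 𝒮 ζ ∧ c < fedQuot μ ζ S := by
  refine ⟨⟨hS, ?_⟩, ?_⟩
  · rintro (⟨-, hμ⟩ | ⟨hζ', -⟩)
    · simp [hμ] at h
    · exact hζ hζ'
  · unfold fedQuot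
    split_ifs with h0
    · exact hc.lt_top
    · exact (ENNReal.lt_div_iff_mul_lt (Or.inl h0) (Or.inl hζ)).2 h

theorem le_mul_of_forall_fedQuot_lt (hS : S ∈ 𝒮) (hc : c ≠ ∞) (hζ : ζ S ≠ ∞)
    (h : S ∈ goodClass μ 𝒮 ζ → fedQuot μ ζ S < c) : μ S ≤ c * ζ S :=
  not_lt.1 fun hlt =>
    let ⟨hg, hq⟩ := lt_fedQuot_of_mul_lt hS hc hζ hlt
    (h hg).asymm hq

end Quotient

section Density

noncomputable def fedQuotSup (μ : OuterMeasure X) (𝒮 : Set (Set X)) (ζ : Set X → ℝ≥0∞) (ε : ℝ≥0∞)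
    (x : X) : ℝ≥0∞ :=
  ⨆ (S : Set X) (_ : S ∈ goodClass μ 𝒮 ζ) (_ : x ∈ S) (_ : Metric.ediam S < ε), fedQuot μ ζ S

variable {μ : OuterMeasure X} {𝒮 : Set (Set X)} {ζ : Set X → ℝ≥0∞} {S : Set X} {x : X}
  {c ε : ℝ≥0∞}

theorem lt_fedQuotSup_iff : c < fedQuotSup μ 𝒮 ζ ε x ↔
    ∃ S ∈ goodClass μ 𝒮 ζ, x ∈ S ∧ Metric.ediam S < ε ∧ c < fedQuot μ ζ S := by
  simp only [fedQuotSup, lt_iSup_iff, exists_prop]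

theorem fedQuot_le_fedQuotSup (hS : S ∈ goodClass μ 𝒮 ζ) (hx : x ∈ S)
    (hd : Metric.ediam S < ε) : fedQuot μ ζ S ≤ fedQuotSup μ 𝒮 ζ ε x :=
  le_iSup_of_le S <| le_iSup_of_le hS <| le_iSup_of_le hx <| le_iSup_of_le hd le_rfl

theorem fedQuotSup_mono {ε ε' : ℝ≥0∞} (h : ε ≤ ε') (x : X) :
    fedQuotSup μ 𝒮 ζ ε x ≤ fedQuotSup μ 𝒮 ζ ε' x :=
  iSup₂_mono fun _ _ => iSup_mono fun _ => iSup_le fun hd => le_iSup_of_le (hd.trans_le h) le_rfl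

theorem federerDensity_eq_iInf_nat (x : X) :
    federerDensity μ 𝒮 ζ x = ⨅ n : ℕ, fedQuotSup μ 𝒮 ζ (n : ℝ≥0∞)⁻¹ x := by
  refine le_antisymm (le_iInf fun n => iInf₂_le _ (by simp)) (le_iInf₂ fun ε hε => ?_)
  obtain ⟨n, hn⟩ := ENNReal.exists_inv_nat_lt hε.ne'
  exact iInf_le_of_le n (fedQuotSup_mono hn.le x)

theorem exists_lt_fedQuot_of_lt_federerDensity (h : c < federerDensity μ 𝒮 ζ x) (hε : 0 < ε) :
    ∃ S ∈ goodClass μ 𝒮 ζ, x ∈ S ∧ Metric.ediam S < ε ∧ c < fedQuot μ ζ S :=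
  lt_fedQuotSup_iff.1 (h.trans_le (iInf₂_le ε hε))

theorem exists_fedQuot_lt_of_federerDensity_lt (h : federerDensity μ 𝒮 ζ x < c) :
    ∃ n : ℕ, ∀ S ∈ goodClass μ 𝒮 ζ, x ∈ S → Metric.ediam S < (n : ℝ≥0∞)⁻¹ →
      fedQuot μ ζ S < c := by
  rw [federerDensity_eq_iInf_nat] at h
  obtain ⟨n, hn⟩ := iInf_lt_iff.1 h
  exact ⟨n, fun S hS hx hd => (fedQuot_le_fedQuotSup hS hx hd).trans_lt hn⟩

theorem exists_subset_lt_fedQuot_of_lt_federerDensity {U : Set X}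
    (h : c < federerDensity μ 𝒮 ζ x) (hU : U ∈ 𝓝 x) (hε : 0 < ε) :
    ∃ S ∈ goodClass μ 𝒮 ζ, x ∈ S ∧ S ⊆ U ∧ Metric.ediam S < ε ∧ c < fedQuot μ ζ S := by
  obtain ⟨r, hr, hrU⟩ := EMetric.mem_nhds_iff.1 hU
  obtain ⟨S, hS, hxS, hSd, hcS⟩ := exists_lt_fedQuot_of_lt_federerDensity h (lt_min hε hr)
  refine ⟨S, hS, hxS, fun y hy => hrU (Metric.mem_eball.2 ?_), hSd.trans_le (min_le_left _ _), hcS⟩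
  exact (Metric.edist_le_ediam_of_mem hy hxS).trans_lt (hSd.trans_le (min_le_right _ _))

variable {cα α : ℝ}

theorem lowerSemicontinuous_fedQuotSup (hα : 0 < α) (μ : OuterMeasure X) (ε : ℝ≥0∞) :
    LowerSemicontinuous (fedQuotSup μ (closedSets X) (zetaDiam cα α) ε) := by
  intro x c hc
  obtain ⟨S, hS, hxS, hSε, hcS⟩ := lt_fedQuotSup_iff.1 hc
  have hζS : zetaDiam cα α S ≠ ∞ := fun h => by simp [fedQuot, h] at hcS
  set g : ℝ≥0∞ → ℝ≥0∞ := fun η => ENNReal.ofReal cα * (Metric.ediam S + η) ^ α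
  have hd : Tendsto (fun η => Metric.ediam S + η) (𝓝 0) (𝓝 (Metric.ediam S)) := by
    simpa using (tendsto_const_nhds (x := Metric.ediam S)).add (tendsto_id (x := 𝓝 (0 : ℝ≥0∞)))
  have hg : Tendsto g (𝓝 0) (𝓝 (zetaDiam cα α S)) :=
    ENNReal.Tendsto.const_mul ((ENNReal.continuous_rpow_const.tendsto _).comp hd)
      (Or.inr ofReal_ne_top)
  have hcg : Tendsto (fun η => c * g η) (𝓝 0) (𝓝 (c * zetaDiam cα α S)) :=
    ENNReal.Tendsto.const_mul hg (Or.inr hcS.ne_top)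
  have hev : ∀ᶠ η in 𝓝 0, Metric.ediam S + η < ε ∧ g η < ∞ ∧ c * g η < μ S :=
    (hd.eventually_lt_const hSε).and ((hg.eventually_lt_const hζS.lt_top).and
      (hcg.eventually_lt_const (mul_lt_of_lt_fedQuot hS hcS)))
  obtain ⟨r, hr, hrη⟩ := ENNReal.nhds_zero_basis.eventually_iff.1 hev
  filter_upwards [Metric.eball_mem_nhds x hr] with y hy
  obtain ⟨hdε, hgtop, hcgμ⟩ := hrη (Metric.mem_eball'.1 hy)
  have hdT : Metric.ediam (S ∪ {y}) ≤ Metric.ediam S + edist x y := by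
    simpa using Metric.ediam_union_le_add_edist hxS (mem_singleton y)
  have hζT : zetaDiam cα α (S ∪ {y}) ≤ g (edist x y) := zetaDiam_le_of_ediam_le hα.le hdT
  obtain ⟨hT, hcT⟩ := lt_fedQuot_of_mul_lt (hS.1.union isClosed_singleton) hcS.ne_top
    (hζT.trans_lt hgtop).ne
    ((mul_le_mul_right hζT c).trans_lt (hcgμ.trans_le (μ.mono subset_union_left)))
  exact hcT.trans_le (fedQuot_le_fedQuotSup hT (mem_union_right _ rfl) (hdT.trans_lt hdε))

theorem measurable_federerDensity [MeasurableSpace X] [OpensMeasurableSpace X] (hα : 0 < α)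
    (μ : OuterMeasure X) : Measurable (federerDensity μ (closedSets X) (zetaDiam cα α)) := by
  simp_rw [funext federerDensity_eq_iInf_nat]
  exact Measurable.iInf fun n => (lowerSemicontinuous_fedQuotSup hα μ _).measurable

end Density

section Hausdorff

variable {cα α : ℝ}

open OuterMeasure in
theorem preCarMeasure_closedSets_eq_pre (hα : 0 < α) (δ : ℝ≥0∞) (R : Set X) :
    preCarMeasure (closedSets X) (zetaDiam cα α) δ R = mkMetric'.pre (zetaDiam cα α) δ R := by
  refine le_antisymm ?_ (le_iInf₂ fun E _ => le_iInf₂ fun hEδ hRE => ?_)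
  · rw [mkMetric'.pre, boundedBy_apply]
    refine le_iInf₂ fun t hRt => ?_
    by_cases hδ : ∀ n, Metric.ediam (t n) ≤ δ
    · refine iInf_le_of_le (fun n => closure (t n)) <| iInf_le_of_le (fun _ => isClosed_closure) <|
        iInf_le_of_le (fun n => (Metric.ediam_closure (t n)).trans_le (hδ n)) <|
        iInf_le_of_le (hRt.trans (iUnion_mono fun _ => subset_closure)) <|
        ENNReal.tsum_le_tsum fun n => ?_
      rw [zetaDiam_closure]
      rcases (t n).eq_empty_or_nonempty with h | h
      · simp [h, zetaDiam_empty hα]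
      · rw [iSup_pos h, extend_eq (fun s (_ : Metric.ediam s ≤ δ) => zetaDiam cα α s) (hδ n)]
    · obtain ⟨n, hn⟩ := not_forall.1 hδ
      have hne : (t n).Nonempty := nonempty_iff_ne_empty.2 fun h => by simp [h] at hn
      refine le_top.trans_eq (ENNReal.tsum_eq_top_of_eq_top ⟨n, ?_⟩).symm
      rw [iSup_pos hne]
      exact extend_eq_top (fun s (_ : Metric.ediam s ≤ δ) => zetaDiam cα α s) hn
  · calc mkMetric'.pre (zetaDiam cα α) δ R ≤ ∑' j, mkMetric'.pre (zetaDiam cα α) δ (E j) :=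
          (measure_mono hRE).trans (measure_iUnion_le E)
      _ ≤ ∑' j, zetaDiam cα α (E j) := ENNReal.tsum_le_tsum fun j => mkMetric'.pre_le (hEδ j)

theorem hausdorffMeasureC_eq_mkMetric' (hα : 0 < α) (R : Set X) :
    hausdorffMeasureC X cα α R = OuterMeasure.mkMetric' (zetaDiam cα α) R := by
  simp only [hausdorffMeasureC, carMeasure, OuterMeasure.mkMetric', OuterMeasure.iSup_apply,
    preCarMeasure_closedSets_eq_pre hα]

theorem hausdorffMeasureC_mono (hα : 0 < α) {R R' : Set X} (h : R ⊆ R') :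
    hausdorffMeasureC X cα α R ≤ hausdorffMeasureC X cα α R' := by
  simp only [hausdorffMeasureC_eq_mkMetric' hα]
  exact measure_mono h

theorem MeasureTheory.OuterMeasure.mkMetric'_le_of_forall_pre_ofReal_le {m : Set X → ℝ≥0∞}
    {s : Set X} {c : ℝ≥0∞}
    (h : ∀ r : ℝ, 0 < r → OuterMeasure.mkMetric'.pre m (ENNReal.ofReal r) s ≤ c) :
    OuterMeasure.mkMetric' m s ≤ c := by
  simp only [OuterMeasure.mkMetric', OuterMeasure.iSup_apply]
  refine iSup₂_le fun δ hδ => ?_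
  obtain ⟨r, -, hr0, hrδ⟩ := ENNReal.lt_iff_exists_real_btwn.1 hδ
  exact (OuterMeasure.mkMetric'.mono_pre m hrδ.le s).trans (h r (ENNReal.ofReal_pos.1 hr0))

theorem MeasureTheory.OuterMeasure.le_mul_mkMetric'_pre {ρ : OuterMeasure X} {m : Set X → ℝ≥0∞}
    {δ t : ℝ≥0∞} {R : Set X} (ht0 : t ≠ 0) (ht : t ≠ ∞)
    (h : ∀ s, Metric.ediam s ≤ δ → (s ∩ R).Nonempty → ρ s ≤ t * m s) :
    ρ R ≤ t * mkMetric'.pre m δ R := by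
  have hle : t⁻¹ • ρ.restrict R ≤ mkMetric'.pre m δ := by
    refine mkMetric'.le_pre.2 fun s hs => ?_
    rw [smul_apply, OuterMeasure.restrict_apply, smul_eq_mul, ENNReal.inv_mul_le_iff ht0 ht]
    rcases (s ∩ R).eq_empty_or_nonempty with hsR | hsR
    · simp [hsR]
    · exact (ρ.mono inter_subset_left).trans (h s hs hsR)
  calc ρ R = t * (t⁻¹ • ρ.restrict R) R := by
        rw [smul_apply, OuterMeasure.restrict_apply, inter_self, smul_eq_mul, ← mul_assoc,
          ENNReal.mul_inv_cancel ht0 ht, one_mul]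
    _ ≤ t * mkMetric'.pre m δ R := mul_le_mul_right (hle R) t

theorem hausdorffMeasureC_eq_mkMetric'_apply [MeasurableSpace X] [BorelSpace X] (hα : 0 < α)
    {s : Set X} (hs : MeasurableSet s) :
    hausdorffMeasureC X cα α s = Measure.mkMetric' (zetaDiam cα α) s := by
  rw [hausdorffMeasureC_eq_mkMetric' hα]
  exact (toMeasure_apply _ _ hs).symm

end Hausdorff

section OuterMeasure

variable {μ : OuterMeasure X}

theorem IsRegularOM.iUnion_eq_iSup (hμ : IsRegularOM μ) {s : ℕ → Set X} (hs : Monotone s) :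
    μ (⋃ n, s n) = ⨆ n, μ (s n) := by
  let _ : MeasurableSpace X := μ.caratheodory
  have htrim : μ.trim = μ := by
    refine le_antisymm (fun E => ?_) (OuterMeasure.le_trim μ)
    obtain ⟨F, hEF, hF, hFE⟩ := hμ E
    rw [OuterMeasure.trim_eq_iInf]
    exact iInf₂_le_of_le F hEF (iInf_le_of_le hF hFE.le)
  have hν : ∀ E, μ.toMeasure le_rfl E = μ E := fun E => by
    rw [← Measure.coe_toOuterMeasure, toMeasure_toOuterMeasure, htrim]
  simp only [← hν, hs.measure_iUnion]

theorem IsBorelOM.le_caratheodory [MeasurableSpace X] [BorelSpace X] (hμ : IsBorelOM μ) :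
    ‹MeasurableSpace X› ≤ μ.caratheodory := by
  rw [BorelSpace.measurable_eq (α := X)]
  exact fun s hs => hμ s hs

theorem AbsContOn.mono {ν : Set X → ℝ≥0∞} {A B : Set X} (h : AbsContOn μ ν A) (hBA : B ⊆ A) :
    AbsContOn μ ν B := fun E hE => by
  have hBE : A ∩ (B ∩ E) = B ∩ E := inter_eq_self_of_subset_right (inter_subset_left.trans hBA)
  rw [← hBE] at hE ⊢
  exact h _ hE

theorem IsBorelOM.countable_and_tsum_le_of_pairwiseDisjoint [MeasurableSpace X] [BorelSpace X]
    (hμ : IsBorelOM μ) {u : Set (Set X)} {V : Set X} {f : Set X → ℝ≥0∞}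
    (hdisj : u.PairwiseDisjoint id) (hmeas : ∀ W ∈ u, MeasurableSet W) (huV : ∀ W ∈ u, W ⊆ V)
    (hV : MeasurableSet V) (hVtop : μ V ≠ ∞) (hf : ∀ W ∈ u, f W < μ W) :
    u.Countable ∧ ∑' W : u, f W ≤ μ V := by
  set ν := μ.toMeasure hμ.le_caratheodory
  have hdisj' : Pairwise (Function.onFun Disjoint fun W : u => (W : Set X)) :=
    fun W W' h => hdisj W.2 W'.2 (Subtype.coe_injective.ne h)
  have hν : ∀ W : u, ν W = μ W := fun W => toMeasure_apply _ _ (hmeas _ W.2)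
  have hνu : ν (⋃ W : u, (W : Set X)) ≤ μ V := by
    rw [← toMeasure_apply _ hμ.le_caratheodory hV]
    exact measure_mono (iUnion_subset fun W => huV _ W.2)
  refine ⟨?_, ?_⟩
  · have h := Measure.countable_meas_pos_of_disjoint_of_meas_iUnion_ne_top ν
      (fun W : u => hmeas _ W.2) hdisj' (ne_top_of_le_ne_top hVtop hνu)
    have huniv : {W : u | 0 < ν W} = univ :=
      eq_univ_of_forall fun W => pos_of_gt ((hν W).symm ▸ hf _ W.2)
    rw [huniv] at h
    exact countable_coe_iff.1 (countable_univ_iff.1 h)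
  · calc ∑' W : u, f W ≤ ∑' W : u, ν (W : Set X) :=
          ENNReal.tsum_le_tsum fun W => (hν W).symm ▸ (hf _ W.2).le
      _ ≤ μ V := (tsum_meas_le_meas_iUnion_of_disjoint ν (fun W => hmeas _ W.2) hdisj').trans hνu

end OuterMeasure

section Vitali

theorem ediam_cthickening_two_mul_diam_le {W : Set X} (hW : Metric.ediam W ≠ ∞) :
    Metric.ediam (Metric.cthickening (2 * Metric.diam W) W) ≤ 5 * Metric.ediam W := by
  have h := Metric.ediam_cthickening_le (s := W) (2 * Metric.diam W).toNNReal
  rw [Real.coe_toNNReal _ (by positivity)] at h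
  calc _ ≤ Metric.ediam W + 2 * ENNReal.ofReal (2 * Metric.diam W) := h
    _ = 5 * Metric.ediam W := by
      rw [ENNReal.ofReal_mul zero_le_two, Metric.diam, ENNReal.ofReal_toReal hW,
        ENNReal.ofReal_ofNat]
      ring

theorem diff_subset_biUnion_cthickening {𝒯 u : Set (Set X)} {B C : Set X} (hC : IsClosed C)
    (hfine : ∀ x ∈ B, ∀ ρ > 0, ∃ S ∈ 𝒯, x ∈ S ∧ Metric.ediam S < ρ)
    (hfin : ∀ S ∈ 𝒯, Metric.ediam S ≠ ∞)
    (hvit : ∀ S ∈ 𝒯, ∃ W ∈ u, (S ∩ W).Nonempty ∧ Metric.diam S ≤ 2 * Metric.diam W) :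
    B \ C ⊆ ⋃ W ∈ {W ∈ u | ¬W ⊆ C}, Metric.cthickening (2 * Metric.diam W) W := by
  rintro x ⟨hxB, hxC⟩
  obtain ⟨ρ, hρ, hρC⟩ := EMetric.mem_nhds_iff.1 (hC.isOpen_compl.mem_nhds hxC)
  obtain ⟨S, hS, hxS, hSρ⟩ := hfine x hxB ρ hρ
  obtain ⟨W, hWu, ⟨z, hzS, hzW⟩, hSW⟩ := hvit S hS
  have hzC : z ∉ C := hρC (Metric.mem_eball.2 ((Metric.edist_le_ediam_of_mem hzS hxS).trans_lt hSρ))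
  refine mem_biUnion ⟨hWu, fun hWC => hzC (hWC hzW)⟩ (Metric.mem_cthickening_iff.2 ?_)
  calc Metric.infEDist x W ≤ edist x z := Metric.infEDist_le_edist_of_mem hzW
    _ ≤ Metric.ediam S := Metric.edist_le_ediam_of_mem hxS hzS
    _ = ENNReal.ofReal (Metric.diam S) := (ENNReal.ofReal_toReal (hfin S hS)).symm
    _ ≤ ENNReal.ofReal (2 * Metric.diam W) := ENNReal.ofReal_le_ofReal hSW

variable {cα α : ℝ}

theorem mkMetric'_pre_cthickening_le (hα : 0 < α) {W : Set X} {r : ℝ}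
    (hW : Metric.ediam W ≤ ENNReal.ofReal (r / 5)) :
    OuterMeasure.mkMetric'.pre (zetaDiam cα α) (ENNReal.ofReal r)
      (Metric.cthickening (2 * Metric.diam W) W) ≤ 5 ^ α * zetaDiam cα α W := by
  have hd := ediam_cthickening_two_mul_diam_le (ne_top_of_le_ne_top ofReal_ne_top hW)
  refine (OuterMeasure.mkMetric'.pre_le ?_).trans ?_
  · calc _ ≤ 5 * Metric.ediam W := hd
      _ ≤ 5 * ENNReal.ofReal (r / 5) := mul_le_mul_right hW 5
      _ = ENNReal.ofReal r := by
        rw [← ENNReal.ofReal_ofNat 5, ← ENNReal.ofReal_mul (by norm_num)]; ring_nf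
  · calc _ ≤ ENNReal.ofReal cα * (5 * Metric.ediam W) ^ α := zetaDiam_le_of_ediam_le hα.le hd
      _ = 5 ^ α * zetaDiam cα α W := by
        rw [ENNReal.mul_rpow_of_nonneg _ _ hα.le, zetaDiam, mul_left_comm]; rfl

/-- Federer's covering estimate: a finite part of the Vitali subfamily is used as it is, and the
rest of `B` is covered by the five-fold enlargements of the remaining members, whose total gauge
is small. -/
theorem mkMetric'_pre_le_tsum_of_vitali (hα : 0 < α) {𝒯 u : Set (Set X)} {B : Set X} {r : ℝ}
    (hr : 0 ≤ r) (hu𝒯 : u ⊆ 𝒯) (hu : u.Countable) (hclosed : ∀ W ∈ u, IsClosed W)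
    (hdiam : ∀ S ∈ 𝒯, Metric.ediam S ≤ ENNReal.ofReal (r / 5))
    (hfine : ∀ x ∈ B, ∀ ρ > 0, ∃ S ∈ 𝒯, x ∈ S ∧ Metric.ediam S < ρ)
    (hvit : ∀ S ∈ 𝒯, ∃ W ∈ u, (S ∩ W).Nonempty ∧ Metric.diam S ≤ 2 * Metric.diam W)
    (hsum : ∑' W : u, zetaDiam cα α (W : Set X) ≠ ∞) :
    OuterMeasure.mkMetric'.pre (zetaDiam cα α) (ENNReal.ofReal r) B ≤
      ∑' W : u, zetaDiam cα α (W : Set X) := by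
  have := hu.to_subtype
  set pre := OuterMeasure.mkMetric'.pre (zetaDiam (X := X) cα α) (ENNReal.ofReal r)
  have hfin : ∀ S ∈ 𝒯, Metric.ediam S ≠ ∞ := fun S hS =>
    ne_top_of_le_ne_top ofReal_ne_top (hdiam S hS)
  set κ : ℝ≥0∞ := 5 ^ α
  have hκ : κ ≠ ∞ := rpow_ne_top_of_nonneg hα.le ofNat_ne_top
  refine ENNReal.le_of_forall_pos_le_add fun ε hε _ => ?_
  obtain ⟨v, hv⟩ : ∃ v : Finset u, ∑' W : {W : u // W ∉ v}, zetaDiam cα α (W.1 : Set X) < ε / κ :=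
    ((ENNReal.tendsto_tsum_compl_atTop_zero hsum).eventually
      (gt_mem_nhds (ENNReal.div_pos (by exact_mod_cast hε.ne') hκ))).exists
  set C := ⋃ W ∈ v, (W : Set X)
  have hC : IsClosed C := v.finite_toSet.isClosed_biUnion fun W _ => hclosed W W.2
  have hcover : B \ C ⊆ ⋃ W : {W : u // W ∉ v},
      Metric.cthickening (2 * Metric.diam (W.1 : Set X)) W.1 := by
    refine (diff_subset_biUnion_cthickening hC hfine hfin hvit).trans
      (iUnion₂_subset fun W ⟨hWu, hWC⟩ => subset_iUnion_of_subset ⟨⟨W, hWu⟩, fun hWv => ?_⟩ le_rfl)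
    exact hWC (subset_biUnion_of_mem (u := fun W : u => (W : Set X)) hWv)
  calc pre B ≤ pre (B ∩ C) + pre (B \ C) := measure_le_inter_add_sdiff pre B C
    _ ≤ ∑ W ∈ v, pre W + ∑' W : {W : u // W ∉ v},
        pre (Metric.cthickening (2 * Metric.diam (W.1 : Set X)) W.1) :=
      add_le_add ((measure_mono inter_subset_right).trans (measure_biUnion_finset_le v _))
        ((measure_mono hcover).trans (measure_iUnion_le _))
    _ ≤ ∑' W : u, zetaDiam cα α (W : Set X) + κ * (ε / κ) := by
      refine add_le_add ((Finset.sum_le_sum fun W _ => OuterMeasure.mkMetric'.pre_le ?_).trans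
        (ENNReal.sum_le_tsum v)) ((ENNReal.tsum_le_tsum fun W =>
          mkMetric'_pre_cthickening_le hα (hdiam _ (hu𝒯 W.1.2))).trans ?_)
      · exact (hdiam _ (hu𝒯 W.2)).trans (ENNReal.ofReal_le_ofReal (by linarith))
      · rw [ENNReal.tsum_mul_left]
        exact mul_le_mul_right hv.le κ
    _ ≤ ∑' W : u, zetaDiam cα α (W : Set X) + ε := add_le_add le_rfl ENNReal.mul_div_le

end Vitali

section Comparison

variable {μ : OuterMeasure X} {cα α : ℝ}

theorem le_mul_hausdorffMeasureC_of_federerDensity_lt (hα : 0 < α) (hμ : IsRegularOM μ)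
    {B : Set X} {t : ℝ≥0∞} (ht : t ≠ ∞)
    (hB : ∀ x ∈ B, federerDensity μ (closedSets X) (zetaDiam cα α) x < t) :
    μ B ≤ t * hausdorffMeasureC X cα α B := by
  rcases eq_or_ne t 0 with rfl | ht0
  · simp [eq_empty_of_forall_notMem fun x hx => ENNReal.not_lt_zero (hB x hx)]
  set Bn : ℕ → Set X := fun n => {x ∈ B | ∀ S ∈ goodClass μ (closedSets X) (zetaDiam cα α),
    x ∈ S → Metric.ediam S < (n : ℝ≥0∞)⁻¹ → fedQuot μ (zetaDiam cα α) S < t}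
  have hmono : Monotone Bn := fun n m hnm x hx =>
    ⟨hx.1, fun S hS hxS hSd => hx.2 S hS hxS
      (hSd.trans_le (ENNReal.inv_le_inv.2 (Nat.cast_le.2 hnm)))⟩
  have hunion : ⋃ n, Bn n = B := subset_antisymm (iUnion_subset fun n => sep_subset _ _)
    fun x hx => mem_iUnion.2 <| (exists_fedQuot_lt_of_federerDensity_lt (hB x hx)).imp
      fun _ hn => ⟨hx, hn⟩
  have hBn : ∀ n, μ (Bn n) ≤ t * OuterMeasure.mkMetric'.pre (zetaDiam cα α)
      ((n + 1 : ℕ) : ℝ≥0∞)⁻¹ (Bn n) := by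
    refine fun n => OuterMeasure.le_mul_mkMetric'_pre ht0 ht fun s hs ⟨x, hxs, hx⟩ => ?_
    have hcl : Metric.ediam (closure s) ≤ ((n + 1 : ℕ) : ℝ≥0∞)⁻¹ := by
      rwa [Metric.ediam_closure]
    refine (μ.mono subset_closure).trans ?_
    rw [← zetaDiam_closure s]
    refine le_mul_of_forall_fedQuot_lt isClosed_closure ht
      (zetaDiam_ne_top hα.le (ne_top_of_le_ne_top (by simp) hcl)) fun hS => ?_
    exact hx.2 _ hS (subset_closure hxs)
      (hcl.trans_lt (ENNReal.inv_lt_inv.2 (by exact_mod_cast n.lt_succ_self)))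
  have hpre : ∀ n, OuterMeasure.mkMetric'.pre (zetaDiam cα α) ((n + 1 : ℕ) : ℝ≥0∞)⁻¹ (Bn n) ≤
      hausdorffMeasureC X cα α B := fun n => by
    rw [hausdorffMeasureC_eq_mkMetric' hα]
    exact ((OuterMeasure.mkMetric'.pre _ _).mono (sep_subset _ _)).trans
      (le_iSup₂ (f := fun r (_ : 0 < r) => OuterMeasure.mkMetric'.pre (zetaDiam cα α) r)
        _ (ENNReal.inv_pos.2 (ENNReal.natCast_ne_top _)) B)
  calc μ B = ⨆ n, μ (Bn n) := by rw [← hμ.iUnion_eq_iSup hmono, hunion]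
    _ ≤ t * hausdorffMeasureC X cα α B :=
      iSup_le fun n => (hBn n).trans (mul_le_mul_right (hpre n) t)

theorem mul_hausdorffMeasureC_le_of_lt_federerDensity (hα : 0 < α) (hμ : IsBorelOM μ)
    {B V : Set X} {t : ℝ≥0∞} (hV : IsOpen V) (hBV : B ⊆ V)
    (hB : ∀ x ∈ B, t < federerDensity μ (closedSets X) (zetaDiam cα α) x) :
    t * hausdorffMeasureC X cα α B ≤ μ V := by
  rcases eq_or_ne (μ V) ∞ with hVtop | hVtop
  · exact hVtop ▸ le_top
  rcases eq_or_ne t 0 with rfl | ht0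
  · simp
  suffices h : hausdorffMeasureC X cα α B ≤ μ V / t from
    (mul_le_mul_right h t).trans ENNReal.mul_div_le
  rw [hausdorffMeasureC_eq_mkMetric' hα]
  refine OuterMeasure.mkMetric'_le_of_forall_pre_ofReal_le fun r hr => ?_
  let _ : MeasurableSpace X := borel X
  have : BorelSpace X := ⟨rfl⟩
  set 𝒯 : Set (Set X) := {S | S ∈ goodClass μ (closedSets X) (zetaDiam cα α) ∧ S ⊆ V ∧
    Metric.ediam S ≤ ENNReal.ofReal (r / 5) ∧ t < fedQuot μ (zetaDiam cα α) S}
  have hfine : ∀ x ∈ B, ∀ ρ > 0, ∃ S ∈ 𝒯, x ∈ S ∧ Metric.ediam S < ρ := fun x hx ρ hρ => by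
    obtain ⟨S, hS, hxS, hSV, hSd, htS⟩ := exists_subset_lt_fedQuot_of_lt_federerDensity (hB x hx)
      (hV.mem_nhds (hBV hx)) (lt_min hρ (ENNReal.ofReal_pos.2 (by positivity : (0 : ℝ) < r / 5)))
    exact ⟨S, ⟨hS, hSV, (hSd.trans_le (min_le_right _ _)).le, htS⟩, hxS,
      hSd.trans_le (min_le_left _ _)⟩
  have hlt : ∀ S ∈ 𝒯, t * zetaDiam cα α S < μ S := fun S hS => mul_lt_of_lt_fedQuot hS.1 hS.2.2.2
  have hmeas : ∀ S ∈ 𝒯, MeasurableSet S := fun S hS => hS.1.1.measurableSet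
  obtain ⟨u, hu𝒯, hdisj, hvit⟩ := Vitali.exists_disjoint_subfamily_covering_enlargement id 𝒯
    Metric.diam 2 one_lt_two (fun _ _ => Metric.diam_nonneg) (r / 5)
    (fun S hS => ENNReal.toReal_le_of_le_ofReal (by positivity) hS.2.2.1)
    (fun S hS => nonempty_iff_ne_empty.2 fun h => by
      simpa [show S = ∅ from h] using hlt S hS)
  obtain ⟨hcount, hsum⟩ := hμ.countable_and_tsum_le_of_pairwiseDisjoint hdisj
    (fun W hW => hmeas W (hu𝒯 hW)) (fun W hW => (hu𝒯 hW).2.1) hV.measurableSet hVtop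
    (fun W hW => hlt W (hu𝒯 hW))
  have hζsum : ∑' W : u, zetaDiam cα α (W : Set X) ≤ μ V / t := by
    rw [ENNReal.le_div_iff_mul_le (Or.inl ht0) (Or.inr hVtop), ← ENNReal.tsum_mul_right]
    simpa only [mul_comm] using hsum
  exact (mkMetric'_pre_le_tsum_of_vitali hα hr.le hu𝒯 hcount (fun W hW => (hu𝒯 hW).1.1)
    (fun S hS => hS.2.2.1) hfine hvit
    (ne_top_of_le_ne_top (ENNReal.div_ne_top hVtop ht0) hζsum)).trans hζsum

theorem mul_hausdorffMeasureC_le_of_le_federerDensity [MeasurableSpace X] [BorelSpace X]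
    (hα : 0 < α) (hμ : IsBorelOM μ) {U : ℕ → Set X} (hU : ∀ j, IsOpen (U j))
    (hμU : ∀ j, μ (U j) ≠ ∞) {B : Set X} (hB : MeasurableSet B) (hBU : B ⊆ ⋃ j, U j)
    {t : ℝ≥0∞} (ht : ∀ x ∈ B, t ≤ federerDensity μ (closedSets X) (zetaDiam cα α) x) :
    t * hausdorffMeasureC X cα α B ≤ μ B := by
  set ν := μ.toMeasure hμ.le_caratheodory
  have hν : ∀ {s}, MeasurableSet s → ν s = μ s := fun hs => toMeasure_apply _ _ hs
  refine ENNReal.mul_le_of_forall_lt fun t' ht' h' hh' => ?_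
  refine (mul_le_mul_right hh'.le t').trans (ENNReal.le_of_forall_pos_le_add fun ε hε _ => ?_)
  obtain ⟨V, hV, hBV, hVB⟩ := ν.exists_isOpen_superset_measure_sdiff_le hU
    (fun j => (hν (hU j).measurableSet).symm ▸ hμU j) hB hBU (ENNReal.coe_ne_zero.2 hε.ne')
  calc t' * hausdorffMeasureC X cα α B ≤ μ V :=
        mul_hausdorffMeasureC_le_of_lt_federerDensity hα hμ hV hBV
          fun x hx => ht'.trans_le (ht x hx)
    _ = ν V := (hν hV.measurableSet).symm
    _ ≤ ν B + ν (V \ B) := tsub_le_iff_left.1 le_measure_sdiff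
    _ ≤ μ B + ε := add_le_add (hν hB).le hVB

theorem measure_eq_zero_of_federerDensity_eq_zero (hα : 0 < α) (hμ : IsRegularOM μ) {Z : Set X}
    (hZ : SigmaFiniteWrt (hausdorffMeasureC X cα α) Z)
    (h0 : ∀ x ∈ Z, federerDensity μ (closedSets X) (zetaDiam cα α) x = 0) : μ Z = 0 := by
  obtain ⟨E, hZE, hE⟩ := hZ
  refine measure_mono_null ((subset_inter subset_rfl hZE).trans (inter_iUnion Z E).subset)
    (measure_iUnion_null fun j => ?_)
  refine ENNReal.eq_zero_of_forall_le_mul (hE j).ne fun s hs hs' => ?_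
  exact (le_mul_hausdorffMeasureC_of_federerDensity_lt hα hμ hs'
    fun x hx => (h0 x hx.1).trans_lt hs).trans
    (mul_le_mul_right (hausdorffMeasureC_mono hα inter_subset_right) s)

theorem hausdorffMeasureC_eq_zero_of_federerDensity_eq_top (hα : 0 < α) (hμ : IsBorelOM μ)
    {U : ℕ → Set X} (hU : ∀ j, IsOpen (U j)) (hμU : ∀ j, μ (U j) ≠ ∞) {Z : Set X}
    (hZU : Z ⊆ ⋃ j, U j)
    (htop : ∀ x ∈ Z, federerDensity μ (closedSets X) (zetaDiam cα α) x = ∞) :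
    hausdorffMeasureC X cα α Z = 0 := by
  have hj : ∀ j, hausdorffMeasureC X cα α (Z ∩ U j) = 0 := fun j =>
    ENNReal.eq_zero_of_forall_le_mul (hμU j) fun s hs hs' =>
      (ENNReal.inv_mul_le_iff hs.ne' hs').1 <|
        mul_hausdorffMeasureC_le_of_lt_federerDensity hα hμ (hU j) inter_subset_right
          fun x hx => (htop x hx.1).symm ▸ ENNReal.inv_lt_top.2 hs
  simp only [hausdorffMeasureC_eq_mkMetric' hα] at hj ⊢
  exact measure_mono_null ((subset_inter subset_rfl hZU).trans (inter_iUnion Z U).subset)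
    (measure_iUnion_null hj)

theorem measure_eq_withDensity_federerDensity [MeasurableSpace X] [BorelSpace X] (hα : 0 < α)
    (hreg : IsRegularOM μ) (hBor : IsBorelOM μ) {U : ℕ → Set X} (hU : ∀ j, IsOpen (U j))
    (hμU : ∀ j, μ (U j) ≠ ∞) {B : Set X} (hB : MeasurableSet B) (hBU : B ⊆ ⋃ j, U j)
    (h0 : SigmaFiniteWrt (hausdorffMeasureC X cα α)
      {x ∈ B | federerDensity μ (closedSets X) (zetaDiam cα α) x = 0})
    (habs : AbsContOn μ (hausdorffMeasureC X cα α) B) :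
    μ B = (Measure.mkMetric' (zetaDiam cα α)).withDensity
      (federerDensity μ (closedSets X) (zetaDiam cα α)) B := by
  set d := federerDensity μ (closedSets X) (zetaDiam cα α)
  have hd : Measurable d := measurable_federerDensity hα μ
  have hν : ∀ {s}, MeasurableSet s → μ.toMeasure hBor.le_caratheodory s = μ s :=
    fun hs => toMeasure_apply _ _ hs
  have hmeas : ∀ c, MeasurableSet (B ∩ d ⁻¹' {c}) := fun c =>
    hB.inter (hd (measurableSet_singleton c))
  have hℋtop : hausdorffMeasureC X cα α (B ∩ d ⁻¹' {∞}) = 0 :=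
    hausdorffMeasureC_eq_zero_of_federerDensity_eq_top hα hBor hU hμU
      (inter_subset_left.trans hBU) fun x hx => hx.2
  rw [← hν hB]
  refine measure_eq_withDensity_of_forall_le_mul hd hB (fun P _ hP t ht hPt => ?_)
    (fun P hPB hP t hPt => ?_) ?_ ?_ ?_
  · rw [hν hP, ← hausdorffMeasureC_eq_mkMetric'_apply hα hP]
    exact le_mul_hausdorffMeasureC_of_federerDensity_lt hα hreg ht hPt
  · rw [hν hP, ← hausdorffMeasureC_eq_mkMetric'_apply hα hP]
    exact mul_hausdorffMeasureC_le_of_le_federerDensity hα hBor hU hμU hP (hPB.trans hBU) hPt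
  · rw [hν (hmeas 0)]
    exact measure_eq_zero_of_federerDensity_eq_zero hα hreg h0 fun x hx => hx.2
  · rw [hν (hmeas ∞)]
    exact habs _ hℋtop
  · rwa [← hausdorffMeasureC_eq_mkMetric'_apply hα (hmeas ∞)]

end Comparison

end Development

theorem stmt7_general {X : Type*} [MetricSpace X] (μ : MeasureTheory.OuterMeasure X)
    (α cα : ℝ) (hα : 0 < α) (A : Set X)
    (h1 : IsRegularOM μ ∧ IsBorelOM μ)
    (h4 : ∃ U : ℕ → Set X, A ⊆ ⋃ j, U j ∧ ∀ j, IsOpen (U j) ∧ μ (U j) < ⊤)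
    (h5 : SigmaFiniteWrt (hausdorffMeasureC X cα α)
      {x ∈ A | federerDensity μ (closedSets X) (zetaDiam cα α) x = 0})
    (h6 : AbsContOn μ (hausdorffMeasureC X cα α) A) :
    (@Measurable A ℝ≥0∞ (borel A) ENNReal.measurableSpace
      (fun x : A => federerDensity μ (closedSets X) (zetaDiam cα α) (x : X))) ∧
    ∀ B ⊆ A, MeasurableSet[borel X] B →
      μ B = omIntegral (hausdorffMeasureC X cα α) B
        (federerDensity μ (closedSets X) (zetaDiam cα α)) := by
  obtain ⟨hreg, hBor⟩ := h1
  obtain ⟨U, hAU, hU⟩ := h4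
  let _ : MeasurableSpace X := borel X
  have : BorelSpace X := ⟨rfl⟩
  have hd := measurable_federerDensity (cα := cα) hα μ
  refine ⟨(Subtype.borelSpace A).measurable_eq ▸ hd.comp measurable_subtype_coe,
    fun B hBA hB => ?_⟩
  rw [omIntegral_eq_setLIntegral _ (fun s hs => hausdorffMeasureC_eq_mkMetric'_apply hα hs) hd hB,
    ← withDensity_apply _ hB]
  exact measure_eq_withDensity_federerDensity hα hreg hBor (fun j => (hU j).1)
    (fun j => (hU j).2.ne) hB (hBA.trans hAU) (h5.mono fun x hx => ⟨hBA hx.1, hx.2⟩)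
    (h6.mono hBA)

/-- Area formula for the Hausdorff measure I. -/
theorem stmt7 {X : Type*} [MetricSpace X] (μ : MeasureTheory.OuterMeasure X)
    (α cα : ℝ) (hα : 0 < α) (hc : 0 < cα) (A : Set X)
    (h1 : IsRegularOM μ ∧ IsBorelOM μ)
    (h2 : CoversFinely (goodClass μ (closedSets X) (zetaDiam cα α)) A)
    (h3 : MeasurableSet[borel X] A)
    (h4 : ∃ U : ℕ → Set X, A ⊆ ⋃ j, U j ∧ ∀ j, IsOpen (U j) ∧ μ (U j) < ⊤)
    (h5 : SigmaFiniteWrt (hausdorffMeasureC X cα α)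
      {x ∈ A | federerDensity μ (closedSets X) (zetaDiam cα α) x = 0})
    (h6 : AbsContOn μ (hausdorffMeasureC X cα α) A) :
    (@Measurable A ℝ≥0∞ (borel A) ENNReal.measurableSpace
      (fun x : A => federerDensity μ (closedSets X) (zetaDiam cα α) (x : X))) ∧
    ∀ B ⊆ A, MeasurableSet[borel X] B →
      μ B = omIntegral (hausdorffMeasureC X cα α) B
        (federerDensity μ (closedSets X) (zetaDiam cα α)) :=
  stmt7_general μ α cα hα A h1 h4 h5 h6
end
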